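/- arXiv:2111.08090 — 6 statements merged into one kernel-verified Lean document; each statement's English description precedes it below -/
import Mathlib

section
/- Let ξ be a real random variable with E[ξ²] > 0 and E[ξ⁴] ≤ B · (E[ξ²])² for some real B ≥ 1. Then for every t ∈ [0,1], E[|ξ|] ≥ (t(1 − t²)² / B) · √(E[ξ²]). -/
/-! Cauchy–Schwarz applied twice along the log-convex sequence of absolute moments gives
`(E ξ²)² ≤ E|ξ| · E|ξ|³` and `(E|ξ|³)² ≤ E ξ² · E ξ⁴`. Chained with `E ξ⁴ ≤ B (E ξ²)²`
they yield `E ξ² ≤ B (E|ξ|)²`, so `√(E ξ²) ≤ B · E|ξ|` once `B ≥ 1`; this is the claim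
with the factor `t (1 - t²)² ≤ 1` dropped. -/

open MeasureTheory

section Moments

variable {Ω : Type*} [MeasurableSpace Ω] {μ : Measure Ω}

theorem integral_mul_sq_le_of_nonneg {f g : Ω → ℝ} (hf0 : 0 ≤ᵐ[μ] f)
    (hg0 : 0 ≤ᵐ[μ] g) (hf : MemLp f 2 μ) (hg : MemLp g 2 μ) :
    (∫ x, f x * g x ∂μ) ^ 2 ≤ (∫ x, f x ^ 2 ∂μ) * ∫ x, g x ^ 2 ∂μ := by
  have hholder := integral_mul_le_Lp_mul_Lq_of_nonneg Real.HolderConjugate.two_two hf0 hg0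
    (by simpa using hf) (by simpa using hg)
  simp only [Real.rpow_two, ← Real.sqrt_eq_rpow] at hholder
  calc (∫ x, f x * g x ∂μ) ^ 2
      ≤ (√(∫ x, f x ^ 2 ∂μ) * √(∫ x, g x ^ 2 ∂μ)) ^ 2 :=
        pow_le_pow_left₀ (integral_nonneg_of_ae <| by
          filter_upwards [hf0, hg0] with x hfx hgx using mul_nonneg hfx hgx) hholder 2
    _ = (∫ x, f x ^ 2 ∂μ) * ∫ x, g x ^ 2 ∂μ := by
        rw [mul_pow, Real.sq_sqrt (integral_nonneg fun _ => sq_nonneg _),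
          Real.sq_sqrt (integral_nonneg fun _ => sq_nonneg _)]

theorem MeasureTheory.Integrable.memLp_two_sqrt {f : Ω → ℝ} (hf : Integrable f μ)
    (hf0 : 0 ≤ᵐ[μ] f) :
    MemLp (fun x => √(f x)) 2 μ := by
  refine (memLp_two_iff_integrable_sq hf.1.aemeasurable.sqrt.aestronglyMeasurable).2 ?_
  refine hf.congr ?_
  filter_upwards [hf0] with x hx using (Real.sq_sqrt hx).symm

theorem integral_sqrt_mul_sq_le {f g : Ω → ℝ} (hf0 : 0 ≤ᵐ[μ] f) (hg0 : 0 ≤ᵐ[μ] g)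
    (hf : Integrable f μ) (hg : Integrable g μ) :
    (∫ x, √(f x * g x) ∂μ) ^ 2 ≤ (∫ x, f x ∂μ) * ∫ x, g x ∂μ := by
  have hcs := integral_mul_sq_le_of_nonneg (.of_forall fun x => Real.sqrt_nonneg (f x))
    (.of_forall fun x => Real.sqrt_nonneg (g x)) (hf.memLp_two_sqrt hf0) (hg.memLp_two_sqrt hg0)
  have hfg : ∫ x, √(f x) * √(g x) ∂μ = ∫ x, √(f x * g x) ∂μ :=
    integral_congr_ae <| by filter_upwards [hf0] with x hx using (Real.sqrt_mul hx _).symm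
  have hf2 : ∫ x, √(f x) ^ 2 ∂μ = ∫ x, f x ∂μ :=
    integral_congr_ae <| by filter_upwards [hf0] with x hx using Real.sq_sqrt hx
  have hg2 : ∫ x, √(g x) ^ 2 ∂μ = ∫ x, g x ∂μ :=
    integral_congr_ae <| by filter_upwards [hg0] with x hx using Real.sq_sqrt hx
  rwa [hfg, hf2, hg2] at hcs

theorem integral_abs_pow_succ_sq_le [IsFiniteMeasure μ] {X : Ω → ℝ} {n : ℕ}
    (hX : MemLp X (n + 2 : ℕ) μ) :
    (∫ x, |X x| ^ (n + 1) ∂μ) ^ 2 ≤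
      (∫ x, |X x| ^ n ∂μ) * ∫ x, |X x| ^ (n + 2) ∂μ := by
  have hintegrable : ∀ k ≤ n + 2, Integrable (fun x => |X x| ^ k) μ := fun k hk => by
    simpa using (hX.mono_exponent (by exact_mod_cast hk)).integrable_norm_pow'
  convert integral_sqrt_mul_sq_le (.of_forall fun x => by positivity)
    (.of_forall fun x => by positivity) (hintegrable n (by omega)) (hintegrable (n + 2) le_rfl)
    using 4 with x
  rw [← pow_add, show n + (n + 2) = (n + 1) * 2 by ring, pow_mul, Real.sqrt_sq (by positivity)]

theorem integral_sq_le_mul_integral_abs_sq [IsFiniteMeasure μ] {X : Ω → ℝ} (hX : MemLp X 4 μ)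
    {B : ℝ} (hB : 0 ≤ B) (hX4 : ∫ x, X x ^ 4 ∂μ ≤ B * (∫ x, X x ^ 2 ∂μ) ^ 2) :
    ∫ x, X x ^ 2 ∂μ ≤ B * (∫ x, |X x| ∂μ) ^ 2 := by
  have h12 := integral_abs_pow_succ_sq_le (n := 1) (by simpa using hX.mono_exponent (by norm_num))
  have h23 := integral_abs_pow_succ_sq_le (n := 2) (by simpa using hX)
  simp only [Nat.reduceAdd, pow_one, sq_abs, Even.pow_abs (show Even 4 by decide)] at h12 h23
  set I1 := ∫ x, |X x| ∂μ
  set I2 := ∫ x, X x ^ 2 ∂μ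
  set I3 := ∫ x, |X x| ^ 3 ∂μ
  rcases (show 0 ≤ I2 from integral_nonneg fun x => sq_nonneg (X x)).eq_or_lt with hI2 | hI2
  · rw [← hI2]; positivity
  have hcubed : I2 ^ 3 * I2 ≤ I2 ^ 3 * (B * I1 ^ 2) :=
    calc I2 ^ 3 * I2 = (I2 ^ 2) ^ 2 := by ring
      _ ≤ (I1 * I3) ^ 2 := pow_le_pow_left₀ (sq_nonneg _) h12 2
      _ = I1 ^ 2 * I3 ^ 2 := by ring
      _ ≤ I1 ^ 2 * (I2 * ∫ x, X x ^ 4 ∂μ) := by gcongr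
      _ ≤ I1 ^ 2 * (I2 * (B * I2 ^ 2)) := by gcongr
      _ = I2 ^ 3 * (B * I1 ^ 2) := by ring
  exact le_of_mul_le_mul_left hcubed (by positivity)

end Moments

theorem first_moment_lower_bound_general
    {Ω : Type*} [MeasurableSpace Ω] (μ : Measure Ω) [IsProbabilityMeasure μ]
    (ξ : Ω → ℝ) (hL4 : MemLp ξ 4 μ)
    (B : ℝ) (hB : 1 ≤ B)
    (hreasonable : ∫ ω, (ξ ω) ^ 4 ∂μ ≤ B * (∫ ω, (ξ ω) ^ 2 ∂μ) ^ 2) :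
    ∀ t ∈ Set.Icc (0 : ℝ) 1,
      t * (1 - t ^ 2) ^ 2 / B * Real.sqrt (∫ ω, (ξ ω) ^ 2 ∂μ)
        ≤ ∫ ω, |ξ ω| ∂μ := by
  rintro t ⟨ht0, ht1⟩
  have hkey := integral_sq_le_mul_integral_abs_sq hL4 (by linarith) hreasonable
  have hsqrt : √(∫ ω, ξ ω ^ 2 ∂μ) ≤ B * ∫ ω, |ξ ω| ∂μ :=
    Real.sqrt_le_iff.mpr ⟨by positivity, by nlinarith⟩
  have hfactor : t * (1 - t ^ 2) ^ 2 ≤ 1 :=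
    mul_le_one₀ ht1 (sq_nonneg _) (pow_le_one₀ (by nlinarith) (by nlinarith))
  calc t * (1 - t ^ 2) ^ 2 / B * √(∫ ω, ξ ω ^ 2 ∂μ)
      ≤ 1 / B * √(∫ ω, ξ ω ^ 2 ∂μ) := by gcongr
    _ ≤ ∫ ω, |ξ ω| ∂μ := by
      rw [one_div_mul_eq_div, div_le_iff₀ (by positivity), mul_comm]
      exact hsqrt

/-- **First-moment lower bound from the second-moment method.**
If a real random variable ξ has `E[ξ²] > 0` and is `B`-reasonable, i.e.
`E[ξ⁴] ≤ B (E[ξ²])²` with `B ≥ 1`, then for every `t ∈ [0,1]` we have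
`E[|ξ|] ≥ (t (1 − t²)² / B) √(E[ξ²])`. -/
theorem first_moment_lower_bound
    {Ω : Type*} [MeasurableSpace Ω] (μ : Measure Ω) [IsProbabilityMeasure μ]
    (ξ : Ω → ℝ) (hmeas : Measurable ξ) (hL4 : MemLp ξ 4 μ)
    (B : ℝ) (hB : 1 ≤ B)
    (hpos : 0 < ∫ ω, (ξ ω) ^ 2 ∂μ)
    (hreasonable : ∫ ω, (ξ ω) ^ 4 ∂μ ≤ B * (∫ ω, (ξ ω) ^ 2 ∂μ) ^ 2) :
    ∀ t ∈ Set.Icc (0 : ℝ) 1,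
      t * (1 - t ^ 2) ^ 2 / B * Real.sqrt (∫ ω, (ξ ω) ^ 2 ∂μ)
        ≤ ∫ ω, |ξ ω| ∂μ :=
  first_moment_lower_bound_general μ ξ hL4 B hB hreasonable
end

section
/- Fix a vertex i of a finite set V and finitely many pairwise distinct subsets R₁,…,R_m ⊆ V, each containing i and satisfying 2 ≤ |R_ℓ| ≤ k, together with reals u₁,…,u_m, not all zero. Let A be a random subset of V containing i in which every vertex j ≠ i is included independently with probability 1/2, and let B_i = { ℓ : R_ℓ ∩ A = {i} }. Then Pr[ Σ_{ℓ∈B_i} u_ℓ² ≥ 2^{−(k−1)} · Σ_{ℓ=1}^m u_ℓ² ] ≥ 1/(4 e^{2(k−1)}). -/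
/-!
Put `s = V \ {i}`, `T_ℓ = R_ℓ \ {i}` and `w_ℓ = u_ℓ²`. For `A ⊆ s` the surviving weight is the
avoidance sum `X(A) = ∑_ℓ w_ℓ [T_ℓ ∩ A = ∅]`, whose mean `μ = ∑_ℓ w_ℓ 2^{-|T_ℓ|}` is at least
`2^{-(k-1)} ∑_ℓ w_ℓ`; so it suffices to show `Pr[X ≥ μ] ≥ 1/(4 e^{2d})` where `d = k - 1 ≥ |T_ℓ|`.

If `d ≤ 1`, then `X(A) + X(s \ A) = 2μ`, so `Pr[X ≥ μ] ≥ 1/2`. If `d ≥ 2`, a Bonami-type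
induction over the vertices gives `E (X - μ)⁴ ≤ 9 · 4^{d-1} (E (X - μ)²)²`: splitting off one
vertex `a` writes `X - μ` as `P ± Q`, where `P` is again a centred avoidance sum and `Q` is an
avoidance sum with nonnegative weights of degree `d - 1`, for which expanding the square gives
`E Q⁴ ≤ 4^{d-1} (E Q²)²`. For any mean-zero `g`, Hölder and Cauchy–Schwarz give
`(E g²)² ≤ 4 Pr[g ≥ 0] E g⁴`, hence `Pr[X ≥ μ] ≥ 1/(36 · 4^{d-1}) ≥ 1/(4 e^{2d})`.
-/

open Finset

lemma half_pow_le_two_pow_mul {a b c r : ℕ} (h : a + b ≤ r + c) :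
    (1 / 2 : ℝ) ^ c ≤ 2 ^ r * ((1 / 2) ^ a * (1 / 2) ^ b) := by
  calc (1 / 2 : ℝ) ^ c = 2 ^ r * (1 / 2) ^ (r + c) := by
        rw [pow_add, ← mul_assoc, ← mul_pow]; norm_num
    _ ≤ 2 ^ r * (1 / 2) ^ (a + b) := by
        gcongr 2 ^ r * ?_
        exact pow_le_pow_of_le_one (by norm_num) (by norm_num) h
    _ = 2 ^ r * ((1 / 2) ^ a * (1 / 2) ^ b) := by rw [pow_add]

-- Cauchy–Schwarz bounds the cross term `6 N ∑ f²h²` by `6 √(9D · D) ∑ f² ∑ h² = 2 · 9D ∑ f² ∑ h²`,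
-- which is exactly what the factor `9` can absorb.
lemma sum_add_pow_four_add_sum_sub_pow_four_le {α : Type*} (S : Finset α) (f h : α → ℝ)
    {N D : ℝ} (hN : 0 ≤ N) (hD : 0 ≤ D)
    (hf : N * ∑ x ∈ S, f x ^ 4 ≤ 9 * D * (∑ x ∈ S, f x ^ 2) ^ 2)
    (hh : N * ∑ x ∈ S, h x ^ 4 ≤ D * (∑ x ∈ S, h x ^ 2) ^ 2) :
    2 * N * (∑ x ∈ S, (f x + h x) ^ 4 + ∑ x ∈ S, (f x - h x) ^ 4)
      ≤ 9 * D * (∑ x ∈ S, (f x + h x) ^ 2 + ∑ x ∈ S, (f x - h x) ^ 2) ^ 2 := by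
  set f4 := ∑ x ∈ S, f x ^ 4
  set h4 := ∑ x ∈ S, h x ^ 4
  set f2 := ∑ x ∈ S, f x ^ 2
  set h2 := ∑ x ∈ S, h x ^ 2
  set cross := ∑ x ∈ S, f x ^ 2 * h x ^ 2
  have h4_sum : ∑ x ∈ S, (f x + h x) ^ 4 + ∑ x ∈ S, (f x - h x) ^ 4
      = 2 * f4 + 12 * cross + 2 * h4 := by
    simp only [f4, h4, cross, mul_sum, ← sum_add_distrib]
    exact sum_congr rfl fun x _ => by ring
  have h2_sum : ∑ x ∈ S, (f x + h x) ^ 2 + ∑ x ∈ S, (f x - h x) ^ 2 = 2 * f2 + 2 * h2 := by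
    simp only [f2, h2, mul_sum, ← sum_add_distrib]
    exact sum_congr rfl fun x _ => by ring
  have hcross : N * cross ≤ 3 * D * (f2 * h2) := by
    have hcs : cross ^ 2 ≤ f4 * h4 := by
      calc cross ^ 2 ≤ (∑ x ∈ S, (f x ^ 2) ^ 2) * ∑ x ∈ S, (h x ^ 2) ^ 2 :=
            sum_mul_sq_le_sq_mul_sq S _ _
        _ = f4 * h4 := by simp only [f4, h4, ← pow_mul]
    refine (le_abs_self _).trans (abs_le_of_sq_le_sq ?_ (by positivity))
    calc (N * cross) ^ 2 = N ^ 2 * cross ^ 2 := by ring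
      _ ≤ N ^ 2 * (f4 * h4) := by gcongr
      _ = (N * f4) * (N * h4) := by ring
      _ ≤ (9 * D * f2 ^ 2) * (D * h2 ^ 2) := by gcongr
      _ = (3 * D * (f2 * h2)) ^ 2 := by ring
  rw [h4_sum, h2_sum]
  linarith [mul_nonneg hD (sq_nonneg h2)]

section MeanZero

variable {α : Type*} (S : Finset α) (g : α → ℝ)

lemma sq_sum_abs_le_four_mul_card_mul_sum_sq (h0 : ∑ x ∈ S, g x = 0) :
    (∑ x ∈ S, |g x|) ^ 2 ≤ 4 * #(S.filter (fun x => 0 ≤ g x)) * ∑ x ∈ S, g x ^ 2 := by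
  set G := S.filter (fun x => 0 ≤ g x)
  have habs : ∑ x ∈ S, |g x| = 2 * ∑ x ∈ G, g x := by
    rw [← add_zero (∑ x ∈ S, |g x|), ← h0, ← sum_add_distrib, sum_filter, mul_sum]
    refine sum_congr rfl fun x _ => ?_
    split_ifs with hx
    · rw [abs_of_nonneg hx]; ring
    · rw [abs_of_neg (not_le.mp hx)]; ring
  have hG : ∑ x ∈ G, g x ^ 2 ≤ ∑ x ∈ S, g x ^ 2 :=
    sum_le_sum_of_subset_of_nonneg (filter_subset _ _) fun x _ _ => sq_nonneg _
  calc (∑ x ∈ S, |g x|) ^ 2 = 4 * (∑ x ∈ G, g x) ^ 2 := by rw [habs]; ring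
    _ ≤ 4 * (#G * ∑ x ∈ G, g x ^ 2) := by gcongr; exact sq_sum_le_card_mul_sum_sq
    _ ≤ 4 * #G * ∑ x ∈ S, g x ^ 2 := by rw [← mul_assoc]; gcongr

lemma sum_sq_pow_three_le :
    (∑ x ∈ S, g x ^ 2) ^ 3 ≤ (∑ x ∈ S, |g x|) ^ 2 * ∑ x ∈ S, g x ^ 4 := by
  set b := ∑ x ∈ S, g x ^ 2
  have h₁ : b ^ 2 ≤ (∑ x ∈ S, |g x|) * ∑ x ∈ S, |g x| ^ 3 :=
    sum_sq_le_sum_mul_sum_of_sq_le_mul S (fun x _ => abs_nonneg _) (fun x _ => by positivity)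
      fun x _ => le_of_eq (by rw [← pow_succ', (by decide : Even 4).pow_abs]; ring)
  have h₂ : (∑ x ∈ S, |g x| ^ 3) ^ 2 ≤ b * ∑ x ∈ S, g x ^ 4 :=
    sum_sq_le_sum_mul_sum_of_sq_le_mul S (fun x _ => sq_nonneg _) (fun x _ => by positivity)
      fun x _ => le_of_eq (by rw [← pow_mul, (by decide : Even (3 * 2)).pow_abs]; ring)
  have hb : 0 ≤ b := sum_nonneg fun x _ => sq_nonneg (g x)
  have h₄ : b ^ 3 * b ≤ ((∑ x ∈ S, |g x|) ^ 2 * ∑ x ∈ S, g x ^ 4) * b :=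
    calc b ^ 3 * b = (b ^ 2) ^ 2 := by ring
      _ ≤ ((∑ x ∈ S, |g x|) * ∑ x ∈ S, |g x| ^ 3) ^ 2 := by gcongr
      _ = (∑ x ∈ S, |g x|) ^ 2 * (∑ x ∈ S, |g x| ^ 3) ^ 2 := by ring
      _ ≤ (∑ x ∈ S, |g x|) ^ 2 * (b * ∑ x ∈ S, g x ^ 4) := by gcongr
      _ = _ := by ring
  rcases hb.eq_or_lt with hb0 | hb0
  · rw [← hb0, zero_pow three_ne_zero]; positivity
  · exact le_of_mul_le_mul_right h₄ hb0

lemma sq_sum_sq_le_four_mul_card_mul_sum_pow_four (h0 : ∑ x ∈ S, g x = 0) :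
    (∑ x ∈ S, g x ^ 2) ^ 2 ≤ 4 * #(S.filter (fun x => 0 ≤ g x)) * ∑ x ∈ S, g x ^ 4 := by
  set b := ∑ x ∈ S, g x ^ 2
  have hb : 0 ≤ b := sum_nonneg fun x _ => sq_nonneg (g x)
  have h : b ^ 2 * b ≤ (4 * #(S.filter (fun x => 0 ≤ g x)) * ∑ x ∈ S, g x ^ 4) * b :=
    calc b ^ 2 * b = b ^ 3 := by ring
      _ ≤ (∑ x ∈ S, |g x|) ^ 2 * ∑ x ∈ S, g x ^ 4 := sum_sq_pow_three_le S g
      _ ≤ (4 * #(S.filter (fun x => 0 ≤ g x)) * b) * ∑ x ∈ S, g x ^ 4 := by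
        gcongr
        exact sq_sum_abs_le_four_mul_card_mul_sum_sq S g h0
      _ = _ := by ring
  rcases hb.eq_or_lt with hb0 | hb0
  · rw [← hb0, zero_pow two_ne_zero]; positivity
  · exact le_of_mul_le_mul_right h hb0

lemma card_le_four_mul_card_filter_nonneg {K : ℝ} (h0 : ∑ x ∈ S, g x = 0) (hK : 1 ≤ 4 * K)
    (hmom : #S * ∑ x ∈ S, g x ^ 4 ≤ K * (∑ x ∈ S, g x ^ 2) ^ 2) :
    (#S : ℝ) ≤ 4 * K * #(S.filter (fun x => 0 ≤ g x)) := by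
  set b := ∑ x ∈ S, g x ^ 2
  rcases (sum_nonneg fun x _ => sq_nonneg (g x) : 0 ≤ b).eq_or_lt with hb0 | hb0
  · have hg : ∀ x ∈ S, g x = 0 := fun x hx => by
      simpa using (sum_eq_zero_iff_of_nonneg fun x _ => sq_nonneg (g x)).mp hb0.symm x hx
    rw [filter_true_of_mem fun x hx => (hg x hx).ge]
    exact le_mul_of_one_le_left (Nat.cast_nonneg _) hK
  · refine le_of_mul_le_mul_right ?_ (pow_pos hb0 2)
    calc (#S : ℝ) * b ^ 2 ≤ #S * (4 * #(S.filter (fun x => 0 ≤ g x)) * ∑ x ∈ S, g x ^ 4) := by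
          gcongr; exact sq_sum_sq_le_four_mul_card_mul_sum_pow_four S g h0
      _ = 4 * #(S.filter (fun x => 0 ≤ g x)) * (#S * ∑ x ∈ S, g x ^ 4) := by ring
      _ ≤ 4 * #(S.filter (fun x => 0 ≤ g x)) * (K * b ^ 2) := by gcongr
      _ = _ := by ring

end MeanZero

lemma two_pow_card_le_two_mul_card_filter {α : Type*} [DecidableEq α] {s : Finset α}
    {p : Finset α → Prop} [DecidablePred p] (hp : ∀ A ⊆ s, p A ∨ p (s \ A)) :
    2 ^ #s ≤ 2 * #(s.powerset.filter p) := by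
  set F := s.powerset.filter p
  have hcover : s.powerset ⊆ F ∪ F.image (s \ ·) := by
    intro A hA
    rw [mem_powerset] at hA
    rcases hp A hA with h | h
    · exact mem_union_left _ (mem_filter.mpr ⟨mem_powerset.mpr hA, h⟩)
    · exact mem_union_right _ (mem_image.mpr ⟨s \ A,
        mem_filter.mpr ⟨mem_powerset.mpr sdiff_subset, h⟩, Finset.sdiff_sdiff_eq_self hA⟩)
  calc 2 ^ #s = #s.powerset := (card_powerset s).symm
    _ ≤ #F + #(F.image (s \ ·)) := (card_le_card hcover).trans (card_union_le _ _)
    _ ≤ 2 * #F := by linarith [card_image_le (s := F) (f := (s \ ·))]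

lemma nine_mul_four_pow_pred_le_exp {d : ℕ} (hd : 2 ≤ d) :
    9 * 4 ^ (d - 1) ≤ Real.exp (2 * d) := by
  have he : (6 : ℝ) ≤ Real.exp 2 := by
    have := Real.exp_one_gt_d9
    rw [show (2 : ℝ) = 1 + 1 by norm_num, Real.exp_add]
    nlinarith
  obtain ⟨n, rfl⟩ := Nat.exists_eq_add_of_le' hd
  rw [mul_comm (2 : ℝ), Real.exp_nat_mul, show n + 2 - 1 = n + 1 by omega]
  calc (9 : ℝ) * 4 ^ (n + 1) = 36 * 4 ^ n := by ring
    _ ≤ 36 * 6 ^ n := by gcongr; norm_num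
    _ = 6 ^ (n + 2) := by ring
    _ ≤ Real.exp 2 ^ (n + 2) := by gcongr

lemma inter_insert_eq_singleton_iff {V : Type*} [DecidableEq V] {i : V} {R A : Finset V}
    (hi : i ∈ R) : R ∩ insert i A = {i} ↔ Disjoint (R.erase i) A := by
  simp only [Finset.ext_iff, disjoint_left, mem_inter, mem_insert, mem_singleton, mem_erase]
  grind

namespace SurvivingWeight

variable {V ι : Type*} [DecidableEq V]

noncomputable def avoidInd (T A : Finset V) : ℝ := if Disjoint T A then 1 else 0

lemma avoidInd_mul_avoidInd (T₁ T₂ A : Finset V) :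
    avoidInd T₁ A * avoidInd T₂ A = avoidInd (T₁ ∪ T₂) A := by
  unfold avoidInd
  by_cases h₁ : Disjoint T₁ A <;> by_cases h₂ : Disjoint T₂ A <;> simp [h₁, h₂]

lemma sum_powerset_avoidInd {s T : Finset V} (hT : T ⊆ s) :
    ∑ A ∈ s.powerset, avoidInd T A = 2 ^ s.card * (1 / 2) ^ T.card := by
  have hfilter : s.powerset.filter (Disjoint T) = (s \ T).powerset := by
    ext A
    simp only [mem_filter, mem_powerset, subset_sdiff, disjoint_comm]
  unfold avoidInd
  rw [sum_boole, hfilter, card_powerset, card_sdiff_of_subset hT,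
    ← Nat.sub_add_cancel (card_le_card hT)]
  simp only [Nat.add_sub_cancel]
  push_cast
  rw [pow_add, mul_assoc, ← mul_pow]
  norm_num

lemma avoidInd_add_avoidInd_sdiff {s T A : Finset V} (hT : T ⊆ s) (hT₁ : T.card ≤ 1) :
    avoidInd T A + avoidInd T (s \ A) = 2 * (1 / 2) ^ T.card := by
  rcases Nat.le_one_iff_eq_zero_or_eq_one.mp hT₁ with h | h
  · norm_num [card_eq_zero.mp h, avoidInd]
  · obtain ⟨t, rfl⟩ := card_eq_one.mp h
    by_cases ht : t ∈ A <;> simp_all [avoidInd]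

lemma avoidInd_erase {a : V} {A : Finset V} (ha : a ∉ A) (T : Finset V) :
    avoidInd (T.erase a) A = avoidInd T A := by
  simp only [avoidInd, disjoint_erase_comm, erase_eq_of_notMem ha]

lemma avoidInd_insert_of_mem {a : V} {T : Finset V} (h : a ∈ T) (A : Finset V) :
    avoidInd T (insert a A) = 0 := by
  simp [avoidInd, disjoint_insert_right, h]

lemma avoidInd_insert_of_notMem {a : V} {T : Finset V} (h : a ∉ T) (A : Finset V) :
    avoidInd T (insert a A) = avoidInd T A := by
  simp [avoidInd, disjoint_insert_right, h]

noncomputable def eraseWeight (a : V) (w : ι → ℝ) (T : ι → Finset V) (ℓ : ι) : ℝ :=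
  if a ∈ T ℓ then w ℓ / 2 else w ℓ

noncomputable def linkWeight (a : V) (w : ι → ℝ) (T : ι → Finset V) (ℓ : ι) : ℝ :=
  if a ∈ T ℓ then w ℓ / 2 else 0

def link (a : V) (T : ι → Finset V) (ℓ : ι) : Finset V :=
  if a ∈ T ℓ then (T ℓ).erase a else ∅

lemma eraseWeight_nonneg {w : ι → ℝ} (hw : ∀ ℓ, 0 ≤ w ℓ) (a : V) (T : ι → Finset V) (ℓ : ι) :
    0 ≤ eraseWeight a w T ℓ := by
  unfold eraseWeight; split_ifs <;> linarith [hw ℓ]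

lemma linkWeight_nonneg {w : ι → ℝ} (hw : ∀ ℓ, 0 ≤ w ℓ) (a : V) (T : ι → Finset V) (ℓ : ι) :
    0 ≤ linkWeight a w T ℓ := by
  unfold linkWeight; split_ifs <;> linarith [hw ℓ]

lemma link_subset {a : V} {s : Finset V} {T : ι → Finset V} (hT : ∀ ℓ, T ℓ ⊆ insert a s)
    (ℓ : ι) : link a T ℓ ⊆ s := by
  unfold link; split_ifs
  · exact subset_insert_iff.mp (hT ℓ)
  · exact empty_subset s

lemma card_link_le (a : V) (T : ι → Finset V) (ℓ : ι) : (link a T ℓ).card ≤ (T ℓ).card - 1 := by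
  unfold link; split_ifs with h
  · rw [card_erase_of_mem h]
  · simp

variable [Fintype ι]

noncomputable def avoidSum (w : ι → ℝ) (T : ι → Finset V) (A : Finset V) : ℝ :=
  ∑ ℓ, w ℓ * avoidInd (T ℓ) A

noncomputable def avoidMean (w : ι → ℝ) (T : ι → Finset V) : ℝ :=
  ∑ ℓ, w ℓ * (1 / 2) ^ (T ℓ).card

lemma sum_powerset_avoidSum {s : Finset V} (w : ι → ℝ) {T : ι → Finset V}
    (hT : ∀ ℓ, T ℓ ⊆ s) :
    ∑ A ∈ s.powerset, avoidSum w T A = 2 ^ s.card * avoidMean w T := by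
  simp only [avoidSum, avoidMean, mul_sum]
  rw [sum_comm]
  refine sum_congr rfl fun ℓ _ => ?_
  rw [← mul_sum, sum_powerset_avoidInd (hT ℓ)]
  ring

lemma avoidSum_sq (w : ι → ℝ) (T : ι → Finset V) (A : Finset V) :
    avoidSum w T A ^ 2 = avoidSum (fun p : ι × ι => w p.1 * w p.2) (fun p => T p.1 ∪ T p.2) A := by
  simp only [avoidSum, sq, sum_mul_sum, ← univ_product_univ, sum_product, ← avoidInd_mul_avoidInd]
  exact sum_congr rfl fun _ _ => sum_congr rfl fun _ _ => by ring

lemma avoidSum_add_avoidSum_sdiff {s : Finset V} (w : ι → ℝ) {T : ι → Finset V}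
    (hT : ∀ ℓ, T ℓ ⊆ s) (hT₁ : ∀ ℓ, (T ℓ).card ≤ 1) (A : Finset V) :
    avoidSum w T A + avoidSum w T (s \ A) = 2 * avoidMean w T := by
  simp only [avoidSum, avoidMean, ← sum_add_distrib, mul_sum]
  refine sum_congr rfl fun ℓ _ => ?_
  rw [← mul_add, avoidInd_add_avoidInd_sdiff (hT ℓ) (hT₁ ℓ)]
  ring

lemma sum_powerset_avoidSum_sq_le {s : Finset V} {w : ι → ℝ} {T : ι → Finset V} {r : ℕ}
    (hw : ∀ ℓ, 0 ≤ w ℓ) (hT : ∀ ℓ, T ℓ ⊆ s) (hr : ∀ ℓ, (T ℓ).card ≤ r) :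
    2 ^ s.card * ∑ A ∈ s.powerset, avoidSum w T A ^ 2
      ≤ 2 ^ r * (∑ A ∈ s.powerset, avoidSum w T A) ^ 2 := by
  have hpair : ∀ i j, w i * w j * (1 / 2) ^ (T i ∪ T j).card
      ≤ 2 ^ r * (w i * (1 / 2) ^ (T i).card * (w j * (1 / 2) ^ (T j).card)) := by
    intro i j
    have hcard : (T i).card + (T j).card ≤ r + (T i ∪ T j).card :=
      add_le_add (hr i) (card_le_card subset_union_right)
    calc w i * w j * (1 / 2) ^ (T i ∪ T j).card
        ≤ w i * w j * (2 ^ r * ((1 / 2) ^ (T i).card * (1 / 2) ^ (T j).card)) := by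
          gcongr
          · exact mul_nonneg (hw i) (hw j)
          · exact half_pow_le_two_pow_mul hcard
      _ = _ := by ring
  simp only [avoidSum_sq]
  rw [sum_powerset_avoidSum (fun p : ι × ι => w p.1 * w p.2)
      fun p => union_subset (hT p.1) (hT p.2), sum_powerset_avoidSum _ hT]
  calc 2 ^ s.card * (2 ^ s.card * avoidMean (fun p : ι × ι => w p.1 * w p.2) fun p => T p.1 ∪ T p.2)
      = (2 ^ s.card) ^ 2 * ∑ i, ∑ j, w i * w j * (1 / 2) ^ (T i ∪ T j).card := by
        rw [avoidMean, ← univ_product_univ, sum_product]; ring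
    _ ≤ (2 ^ s.card) ^ 2
          * ∑ i, ∑ j, 2 ^ r * (w i * (1 / 2) ^ (T i).card * (w j * (1 / 2) ^ (T j).card)) := by
        gcongr (2 ^ s.card) ^ 2 * ?_
        exact sum_le_sum fun i _ => sum_le_sum fun j _ => hpair i j
    _ = 2 ^ r * (2 ^ s.card * avoidMean w T) ^ 2 := by
        rw [avoidMean, mul_pow, sq (∑ ℓ, _), sum_mul_sum]
        simp only [← mul_sum]
        ring

lemma sum_powerset_avoidSum_pow_four_le {s : Finset V} {w : ι → ℝ} {T : ι → Finset V} {q : ℕ}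
    (hw : ∀ ℓ, 0 ≤ w ℓ) (hT : ∀ ℓ, T ℓ ⊆ s) (hq : ∀ ℓ, (T ℓ).card ≤ q) :
    2 ^ s.card * ∑ A ∈ s.powerset, avoidSum w T A ^ 4
      ≤ 4 ^ q * (∑ A ∈ s.powerset, avoidSum w T A ^ 2) ^ 2 := by
  have h := sum_powerset_avoidSum_sq_le (r := 2 * q) (fun p : ι × ι => mul_nonneg (hw p.1) (hw p.2))
    (fun p => union_subset (hT p.1) (hT p.2))
    (fun p => (card_union_le _ _).trans (by linarith [hq p.1, hq p.2]))
  rw [pow_mul, show (2 : ℝ) ^ 2 = 4 by norm_num] at h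
  simpa only [← avoidSum_sq, ← pow_mul] using h

noncomputable def avoidDev (w : ι → ℝ) (T : ι → Finset V) (A : Finset V) : ℝ :=
  avoidSum w T A - avoidMean w T

lemma sum_powerset_avoidDev {s : Finset V} (w : ι → ℝ) {T : ι → Finset V}
    (hT : ∀ ℓ, T ℓ ⊆ s) : ∑ A ∈ s.powerset, avoidDev w T A = 0 := by
  unfold avoidDev
  rw [sum_sub_distrib, sum_powerset_avoidSum w hT, sum_const, card_powerset,
    nsmul_eq_mul]
  push_cast
  ring

lemma avoidDev_eq_add {a : V} {A : Finset V} (ha : a ∉ A) (w : ι → ℝ) (T : ι → Finset V) :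
    avoidDev w T A = avoidDev (eraseWeight a w T) (fun ℓ => (T ℓ).erase a) A
      + avoidSum (linkWeight a w T) (link a T) A := by
  simp only [avoidDev, avoidSum, avoidMean, ← sum_sub_distrib, ← sum_add_distrib]
  refine sum_congr rfl fun ℓ _ => ?_
  by_cases h : a ∈ T ℓ
  · simp only [eraseWeight, linkWeight, link, if_pos h, avoidInd_erase ha,
      ← card_erase_add_one h, pow_succ]
    ring
  · simp only [eraseWeight, linkWeight, link, if_neg h, erase_eq_of_notMem h]
    ring

lemma avoidDev_insert_eq_sub {a : V} {A : Finset V} (ha : a ∉ A) (w : ι → ℝ)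
    (T : ι → Finset V) :
    avoidDev w T (insert a A) = avoidDev (eraseWeight a w T) (fun ℓ => (T ℓ).erase a) A
      - avoidSum (linkWeight a w T) (link a T) A := by
  simp only [avoidDev, avoidSum, avoidMean, ← sum_sub_distrib]
  refine sum_congr rfl fun ℓ _ => ?_
  by_cases h : a ∈ T ℓ
  · simp only [eraseWeight, linkWeight, link, if_pos h, avoidInd_erase ha,
      avoidInd_insert_of_mem h, ← card_erase_add_one h, pow_succ]
    ring
  · simp only [eraseWeight, linkWeight, link, if_neg h, erase_eq_of_notMem h,
      avoidInd_insert_of_notMem h]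
    ring

theorem sum_powerset_avoidDev_pow_four_le {s : Finset V} {w : ι → ℝ} {T : ι → Finset V} {d : ℕ}
    (hw : ∀ ℓ, 0 ≤ w ℓ) (hT : ∀ ℓ, T ℓ ⊆ s) (hd : ∀ ℓ, (T ℓ).card ≤ d) :
    2 ^ s.card * ∑ A ∈ s.powerset, avoidDev w T A ^ 4
      ≤ 9 * 4 ^ (d - 1) * (∑ A ∈ s.powerset, avoidDev w T A ^ 2) ^ 2 := by
  induction s using Finset.induction_on generalizing w T with
  | empty =>
    have h0 : avoidDev w T ∅ = 0 := by simpa using sum_powerset_avoidDev w hT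
    simp [h0]
  | insert a s ha ih =>
    have hnot : ∀ A ∈ s.powerset, a ∉ A := fun A hA haA => ha (mem_powerset.mp hA haA)
    have hP := ih (eraseWeight_nonneg hw a T) (fun ℓ => subset_insert_iff.mp (hT ℓ))
      (fun ℓ => (card_erase_le).trans (hd ℓ))
    have hQ := sum_powerset_avoidSum_pow_four_le (q := d - 1) (linkWeight_nonneg hw a T)
      (link_subset hT) (fun ℓ => (card_link_le a T ℓ).trans (Nat.sub_le_sub_right (hd ℓ) 1))
    have step :=
      sum_add_pow_four_add_sum_sub_pow_four_le _ _ _ (by positivity) (by positivity) hP hQ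
    have hplus : ∀ n : ℕ, ∑ A ∈ s.powerset, avoidDev w T A ^ n
        = ∑ A ∈ s.powerset, (avoidDev (eraseWeight a w T) (fun ℓ => (T ℓ).erase a) A
            + avoidSum (linkWeight a w T) (link a T) A) ^ n :=
      fun n => sum_congr rfl fun A hA => by rw [avoidDev_eq_add (hnot A hA)]
    have hminus : ∀ n : ℕ, ∑ A ∈ s.powerset, avoidDev w T (insert a A) ^ n
        = ∑ A ∈ s.powerset, (avoidDev (eraseWeight a w T) (fun ℓ => (T ℓ).erase a) A
            - avoidSum (linkWeight a w T) (link a T) A) ^ n :=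
      fun n => sum_congr rfl fun A hA => by rw [avoidDev_insert_eq_sub (hnot A hA)]
    rw [sum_powerset_insert ha, sum_powerset_insert ha, card_insert_of_notMem ha, pow_succ',
      hplus, hplus, hminus, hminus]
    exact step

theorem two_pow_card_le_four_exp_mul_card_filter {s : Finset V} {w : ι → ℝ} {T : ι → Finset V}
    {d : ℕ} (hw : ∀ ℓ, 0 ≤ w ℓ) (hT : ∀ ℓ, T ℓ ⊆ s) (hd : ∀ ℓ, (T ℓ).card ≤ d) :
    (2 : ℝ) ^ s.card
      ≤ 4 * Real.exp (2 * d) * #(s.powerset.filter fun A => avoidMean w T ≤ avoidSum w T A) := by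
  set F := s.powerset.filter fun A => avoidMean w T ≤ avoidSum w T A
  rcases le_or_gt d 1 with hd₁ | hd₂
  · have hcompl : ∀ A ⊆ s,
        avoidMean w T ≤ avoidSum w T A ∨ avoidMean w T ≤ avoidSum w T (s \ A) := fun A _ => by
      have := avoidSum_add_avoidSum_sdiff w hT (fun ℓ => (hd ℓ).trans hd₁) A
      by_contra! h
      linarith [h.1, h.2]
    calc (2 : ℝ) ^ s.card ≤ 2 * #F := by
          exact_mod_cast two_pow_card_le_two_mul_card_filter hcompl
      _ ≤ 4 * Real.exp (2 * d) * #F := by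
          gcongr
          linarith [Real.one_le_exp (by positivity : (0 : ℝ) ≤ 2 * d)]
  · have hG : s.powerset.filter (fun A => 0 ≤ avoidDev w T A) ⊆ F :=
      monotone_filter_right _ fun _ _ => sub_nonneg.mp
    have hcard : ((#s.powerset : ℕ) : ℝ) = 2 ^ s.card := by rw [card_powerset]; push_cast; rfl
    have hmom := sum_powerset_avoidDev_pow_four_le hw hT hd
    rw [← hcard] at hmom ⊢
    calc (#s.powerset : ℝ)
        ≤ 4 * (9 * 4 ^ (d - 1)) * #(s.powerset.filter fun A => 0 ≤ avoidDev w T A) :=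
          card_le_four_mul_card_filter_nonneg _ _ (sum_powerset_avoidDev w hT)
            (by linarith [one_le_pow₀ (M₀ := ℝ) (a := 4) (n := d - 1) (by norm_num)]) hmom
      _ ≤ 4 * Real.exp (2 * d) * #F := by
          gcongr
          exact nine_mul_four_pow_pred_le_exp hd₂

end SurvivingWeight

open SurvivingWeight in
theorem surviving_weight_anticoncentration_general
    {V : Type*} [Fintype V] [DecidableEq V] (i : V) (k m : ℕ)
    (R : Fin m → Finset V)
    (hR : ∀ ℓ, i ∈ R ℓ ∧ 2 ≤ (R ℓ).card ∧ (R ℓ).card ≤ k)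
    (u : Fin m → ℝ) (hu : ∃ ℓ, u ℓ ≠ 0) :
    1 / (4 * Real.exp (2 * ((k : ℝ) - 1)))
      ≤ ((((Finset.univ : Finset V).erase i).powerset.filter (fun A =>
            (1 / 2 : ℝ) ^ (k - 1) * ∑ ℓ, (u ℓ) ^ 2
              ≤ ∑ ℓ ∈ Finset.univ.filter (fun ℓ => R ℓ ∩ insert i A = {i}),
                  (u ℓ) ^ 2)).card : ℝ)
          / 2 ^ (Fintype.card V - 1) := by
  obtain ⟨ℓ₀, -⟩ := hu
  have hk : 1 ≤ k := by have := hR ℓ₀; omega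
  set w : Fin m → ℝ := fun ℓ => u ℓ ^ 2
  set T : Fin m → Finset V := fun ℓ => (R ℓ).erase i
  have hTcard : ∀ ℓ, (T ℓ).card ≤ k - 1 := fun ℓ => by
    simp only [T, card_erase_of_mem (hR ℓ).1]; have := hR ℓ; omega
  have hmean : (1 / 2 : ℝ) ^ (k - 1) * ∑ ℓ, w ℓ ≤ avoidMean w T := by
    rw [avoidMean, mul_sum]
    refine sum_le_sum fun ℓ _ => ?_
    rw [mul_comm]
    exact mul_le_mul_of_nonneg_left (pow_le_pow_of_le_one (by norm_num) (by norm_num) (hTcard ℓ))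
      (sq_nonneg _)
  have hsurviving : ∀ A, ∑ ℓ ∈ univ.filter (fun ℓ => R ℓ ∩ insert i A = {i}), w ℓ
      = avoidSum w T A := fun A => by
    simp only [sum_filter, avoidSum, avoidInd, T, inter_insert_eq_singleton_iff (hR _).1,
      mul_ite, mul_one, mul_zero]
  have hbound := two_pow_card_le_four_exp_mul_card_filter (s := univ.erase i)
    (fun ℓ => sq_nonneg (u ℓ)) (fun ℓ => erase_subset_erase i (subset_univ (R ℓ))) hTcard
  rw [card_erase_of_mem (mem_univ i), card_univ, Nat.cast_sub hk, Nat.cast_one] at hbound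
  rw [div_le_div_iff₀ (by positivity) (by positivity), one_mul]
  refine hbound.trans (le_of_le_of_eq ?_ (mul_comm _ _))
  gcongr 4 * Real.exp (2 * ((k : ℝ) - 1)) * (#?_ : ℝ)
  exact monotone_filter_right _ fun A _ h => (hsurviving A).ge.trans' (hmean.trans h)

/-- **Anticoncentration of the surviving weight.**
In the setting of a fixed vertex `i` of a finite set `V`, pairwise distinct subsets
`R₁, …, R_m ⊆ V` each containing `i` with `2 ≤ |R_ℓ| ≤ k`, and reals `u₁, …, u_m` not all
zero: choosing `A ∋ i` by including each vertex `j ≠ i` independently with probability `1/2`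
(equivalently, uniformly among subsets of `V \ {i}`, then adding `i`), and letting
`B_i = {ℓ : R_ℓ ∩ A = {i}}`, we have
`Pr[Σ_{ℓ∈B_i} u_ℓ² ≥ 2^{−(k−1)} Σ_ℓ u_ℓ²] ≥ 1/(4 e^{2(k−1)})`. -/
theorem surviving_weight_anticoncentration
    {V : Type*} [Fintype V] [DecidableEq V] (i : V) (k m : ℕ)
    (R : Fin m → Finset V) (hinj : Function.Injective R)
    (hR : ∀ ℓ, i ∈ R ℓ ∧ 2 ≤ (R ℓ).card ∧ (R ℓ).card ≤ k)
    (u : Fin m → ℝ) (hu : ∃ ℓ, u ℓ ≠ 0) :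
    1 / (4 * Real.exp (2 * ((k : ℝ) - 1)))
      ≤ ((((Finset.univ : Finset V).erase i).powerset.filter (fun A =>
            (1 / 2 : ℝ) ^ (k - 1) * ∑ ℓ, (u ℓ) ^ 2
              ≤ ∑ ℓ ∈ Finset.univ.filter (fun ℓ => R ℓ ∩ insert i A = {i}),
                  (u ℓ) ^ 2)).card : ℝ)
          / 2 ^ (Fintype.card V - 1) :=
  surviving_weight_anticoncentration_general i k m R hR u hu
end

section
/- Let f : {−1,1}ⁿ → ℝ be a nonconstant function whose multilinear (Fourier) expansion has degree at most a. Then, under the uniform distribution on {−1,1}ⁿ, Pr[ f(x) > E[f] ] ≥ 1/(4 e^{2a}). -/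
/-!
Write `g` for `f - E[f]`, a mean-zero function of degree at most `a`, and `K = (q - 1) ^ a`.
For `2 < q ≤ 3`, hypercontractivity, proved by induction on the coordinates from the two-point
inequality `|A + c|^q + |A - c|^q ≤ 2 (A² + (q - 1) c²)^(q/2)` and Minkowski's inequality in
`L^(q/2)`, gives `E|g|^q ≤ (K E[g²])^(q/2)`. Hölder's inequality
`E[g²]^(q-1) ≤ E|g|^(q-2) E|g|^q` then gives `E[g²] ≤ K^(q/(q-2)) E|g|²`. Since `g` has mean zero,
`E|g| = 2 E[g 1_{g>0}] ≤ 2 √(E[g²] Pr[g > 0])` by Cauchy–Schwarz, so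
`Pr[g > 0] ≥ K^(-q/(q-2)) / 4 ≥ e^(-a q) / 4`. Letting `q → 2` gives the bound `e^(-2a) / 4`.
-/

open Finset Real Topology

namespace BooleanCube

lemma sq_rpow_half (x q : ℝ) : (x ^ 2) ^ (q / 2) = |x| ^ q := by
  rw [← sq_abs, ← rpow_natCast, ← rpow_mul (abs_nonneg x)]
  ring_nf

lemma sum_sq_add_sq_rpow_le {α : Type*} {s : Finset α} {A B : α → ℝ} {q C a b : ℝ} (hq : 2 ≤ q)
    (hC : 0 ≤ C) (ha : 0 ≤ a) (hb : 0 ≤ b) (hA : ∑ x ∈ s, |A x| ^ q ≤ C * a ^ (q / 2))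
    (hB : ∑ x ∈ s, |B x| ^ q ≤ C * b ^ (q / 2)) :
    ∑ x ∈ s, (A x ^ 2 + B x ^ 2) ^ (q / 2) ≤ C * (a + b) ^ (q / 2) := by
  have hp : 0 < q / 2 := by linarith
  have hroot : ∀ {X Y : ℝ}, 0 ≤ X → 0 ≤ Y →
      (X ≤ C * Y ^ (q / 2) ↔ X ^ (1 / (q / 2)) ≤ C ^ (1 / (q / 2)) * Y) := fun hX hY => by
    rw [← rpow_le_rpow_iff hX (by positivity) (one_div_pos.2 hp), mul_rpow hC (by positivity),
      ← rpow_mul hY, mul_one_div_cancel hp.ne', rpow_one]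
  have hmink := Lp_add_le_of_nonneg (s := s) (f := fun x => A x ^ 2) (g := fun x => B x ^ 2)
    (p := q / 2) (by linarith) (fun _ _ => sq_nonneg _) (fun _ _ => sq_nonneg _)
  simp only [sq_rpow_half] at hmink
  rw [hroot (sum_nonneg fun _ _ => by positivity) (by positivity)]
  rw [hroot (sum_nonneg fun _ _ => by positivity) ha] at hA
  rw [hroot (sum_nonneg fun _ _ => by positivity) hb] at hB
  linarith

section TwoPoint

open Set

variable {q : ℝ}

lemma nonneg_of_hasDerivAt_nonneg {φ φ' : ℝ → ℝ} (hcont : ContinuousOn φ (Icc 0 1))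
    (hderiv : ∀ t ∈ Ioo (0 : ℝ) 1, HasDerivAt φ (φ' t) t) (hφ' : ∀ t ∈ Ioo (0 : ℝ) 1, 0 ≤ φ' t)
    (hφ0 : φ 0 = 0) {t : ℝ} (ht : t ∈ Icc (0 : ℝ) 1) : 0 ≤ φ t := by
  have hmono : MonotoneOn φ (Icc 0 1) :=
    monotoneOn_of_hasDerivWithinAt_nonneg (convex_Icc 0 1) hcont
      (by simpa using fun t ht => (hderiv t ht).hasDerivWithinAt) (by simpa using hφ')
  simpa [hφ0] using hmono (left_mem_Icc.2 zero_le_one) ht ht.1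

lemma one_add_rpow_sub_one_sub_rpow_le (hq2 : 2 ≤ q) (hq3 : q ≤ 3) {t : ℝ}
    (ht : t ∈ Icc (0 : ℝ) 1) : (1 + t) ^ (q - 1) - (1 - t) ^ (q - 1) ≤ 2 * (q - 1) * t := by
  suffices 0 ≤ 2 * (q - 1) * t - ((1 + t) ^ (q - 1) - (1 - t) ^ (q - 1)) by linarith
  refine nonneg_of_hasDerivAt_nonneg
    (φ := fun t => 2 * (q - 1) * t - ((1 + t) ^ (q - 1) - (1 - t) ^ (q - 1)))
    (φ' := fun t => (q - 1) * (2 - ((1 + t) ^ (q - 2) + (1 - t) ^ (q - 2))))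
    (by fun_prop (disch := intros; linarith)) (fun t ht => ?_) (fun t ht => ?_) (by simp) ht
  · have h1 := ((hasDerivAt_id' t).const_add 1).rpow_const (p := q - 1)
      (Or.inl (by linarith [ht.1]))
    have h2 := ((hasDerivAt_id' t).const_sub 1).rpow_const (p := q - 1)
      (Or.inl (by linarith [ht.2]))
    refine (((hasDerivAt_id' t).const_mul (2 * (q - 1))).sub (h1.sub h2)).congr_deriv ?_
    rw [show q - 1 - 1 = q - 2 by ring]
    ring
  · -- midpoint concavity of `x ↦ x ^ (q - 2)`
    have hconc := (Real.concaveOn_rpow (p := q - 2) (by linarith) (by linarith)).2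
      (mem_Ici.2 (by linarith [ht.1] : (0 : ℝ) ≤ 1 + t))
      (mem_Ici.2 (by linarith [ht.2] : (0 : ℝ) ≤ 1 - t))
      (by norm_num : (0 : ℝ) ≤ 1 / 2) (by norm_num : (0 : ℝ) ≤ 1 / 2) (by norm_num)
    simp only [smul_eq_mul] at hconc
    rw [show 1 / 2 * (1 + t) + 1 / 2 * (1 - t) = (1 : ℝ) by ring, one_rpow] at hconc
    have : 0 ≤ q - 1 := by linarith
    nlinarith

lemma one_add_rpow_add_one_sub_rpow_le (hq2 : 2 ≤ q) (hq3 : q ≤ 3) {t : ℝ}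
    (ht : t ∈ Icc (0 : ℝ) 1) : (1 + t) ^ q + (1 - t) ^ q ≤ 2 + q * (q - 1) * t ^ 2 := by
  suffices 0 ≤ 2 + q * (q - 1) * t ^ 2 - ((1 + t) ^ q + (1 - t) ^ q) by linarith
  refine nonneg_of_hasDerivAt_nonneg
    (φ := fun t => 2 + q * (q - 1) * t ^ 2 - ((1 + t) ^ q + (1 - t) ^ q))
    (φ' := fun t => q * (2 * (q - 1) * t - ((1 + t) ^ (q - 1) - (1 - t) ^ (q - 1))))
    (by fun_prop (disch := intros; linarith)) (fun t ht => ?_) (fun t ht => ?_) (by norm_num) ht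
  · have h1 := ((hasDerivAt_id' t).const_add 1).rpow_const (p := q) (Or.inr (by linarith))
    have h2 := ((hasDerivAt_id' t).const_sub 1).rpow_const (p := q) (Or.inr (by linarith))
    refine ((((hasDerivAt_pow 2 t).const_mul (q * (q - 1))).const_add 2).sub
      (h1.add h2)).congr_deriv ?_
    ring
  · have := one_add_rpow_sub_one_sub_rpow_le hq2 hq3 (Ioo_subset_Icc_self ht)
    have : 0 ≤ q := by linarith
    nlinarith

lemma two_point_of_le (hq2 : 2 ≤ q) (hq3 : q ≤ 3) {A c : ℝ} (hc : 0 ≤ c) (hcA : c ≤ A) :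
    (A + c) ^ q + (A - c) ^ q ≤ 2 * (A ^ 2 + (q - 1) * c ^ 2) ^ (q / 2) := by
  obtain rfl | hA := (hc.trans hcA).eq_or_lt
  · obtain rfl : c = 0 := le_antisymm hcA hc
    simp [zero_rpow (by linarith : q ≠ 0), zero_rpow (by linarith : q / 2 ≠ 0)]
  set t := c / A
  have hcAt : c = A * t := (mul_div_cancel₀ c hA.ne').symm
  have ht : t ∈ Icc (0 : ℝ) 1 := ⟨by positivity, (div_le_one hA).2 hcA⟩
  have hs : 0 ≤ (q - 1) * t ^ 2 := mul_nonneg (by linarith) (sq_nonneg t)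
  have hbern := one_add_mul_self_le_rpow_one_add (by linarith : -1 ≤ (q - 1) * t ^ 2)
    (p := q / 2) (by linarith)
  calc (A + c) ^ q + (A - c) ^ q = A ^ q * ((1 + t) ^ q + (1 - t) ^ q) := by
        rw [hcAt, show A + A * t = A * (1 + t) by ring, show A - A * t = A * (1 - t) by ring,
          mul_rpow hA.le (by linarith [ht.1]), mul_rpow hA.le (by linarith [ht.2]), mul_add]
    _ ≤ A ^ q * (2 * (1 + (q - 1) * t ^ 2) ^ (q / 2)) := by
        gcongr
        nlinarith [one_add_rpow_add_one_sub_rpow_le hq2 hq3 ht]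
    _ = 2 * (A ^ 2 + (q - 1) * c ^ 2) ^ (q / 2) := by
        rw [hcAt, show A ^ 2 + (q - 1) * (A * t) ^ 2 = A ^ 2 * (1 + (q - 1) * t ^ 2) by ring,
          mul_rpow (sq_nonneg A) (by linarith), sq_rpow_half, abs_of_pos hA]
        ring

lemma two_point (hq2 : 2 ≤ q) (hq3 : q ≤ 3) (A c : ℝ) :
    |A + c| ^ q + |A - c| ^ q ≤ 2 * (A ^ 2 + (q - 1) * c ^ 2) ^ (q / 2) := by
  wlog hA : 0 ≤ A generalizing A c
  · have h := this (-A) (-c) (by linarith)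
    rwa [neg_sq, neg_sq, ← neg_add, neg_sub_neg, abs_neg, abs_sub_comm] at h
  wlog hc : 0 ≤ c generalizing c
  · have h := this (-c) (by linarith)
    rwa [neg_sq, ← sub_eq_add_neg, sub_neg_eq_add, add_comm] at h
  rw [abs_of_nonneg (by linarith : 0 ≤ A + c)]
  rcases le_total c A with hcA | hAc
  · rw [abs_of_nonneg (sub_nonneg.2 hcA)]
    exact two_point_of_le hq2 hq3 hc hcA
  · rw [abs_of_nonpos (sub_nonpos.2 hAc), neg_sub, add_comm A c]
    calc _ ≤ 2 * (c ^ 2 + (q - 1) * A ^ 2) ^ (q / 2) := two_point_of_le hq2 hq3 hA hAc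
      _ ≤ _ := by
        have : 0 ≤ q - 1 := by linarith
        have hsq := pow_le_pow_left₀ hA hAc 2
        gcongr 2 * ?_
        exact rpow_le_rpow (by positivity) (by nlinarith) (by linarith)

lemma two_point_of_sq_mul_le (hq2 : 2 ≤ q) (hq3 : q ≤ 3) {ρ : ℝ} (hρ : ρ ^ 2 * (q - 1) ≤ 1)
    (A B : ℝ) : |A + ρ * B| ^ q + |A - ρ * B| ^ q ≤ 2 * (A ^ 2 + B ^ 2) ^ (q / 2) := by
  refine (two_point hq2 hq3 A (ρ * B)).trans ?_
  gcongr
  · nlinarith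
  · nlinarith

end TwoPoint

section Anticoncentration

variable {α : Type*} {s : Finset α} {g : α → ℝ}

lemma sum_abs_eq_two_mul_sum_filter_pos (hg : ∑ x ∈ s, g x = 0) :
    ∑ x ∈ s, |g x| = 2 * ∑ x ∈ s with 0 < g x, g x := by
  have hsplit := sum_filter_add_sum_filter_not s (fun x => 0 < g x) g
  rw [← sum_filter_add_sum_filter_not s (fun x => 0 < g x),
    sum_congr rfl fun x hx => abs_of_pos (mem_filter.1 hx).2,
    sum_congr rfl fun x hx => abs_of_nonpos (not_lt.1 (mem_filter.1 hx).2), sum_neg_distrib]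
  linarith

lemma sq_sum_filter_pos_le (s : Finset α) (g : α → ℝ) :
    (∑ x ∈ s with 0 < g x, g x) ^ 2 ≤ #{x ∈ s | 0 < g x} * ∑ x ∈ s, g x ^ 2 :=
  (sq_sum_le_card_mul_sum_sq ..).trans <| by
    gcongr
    exact filter_subset _ _

/-- Hölder interpolation of the `L²` norm between the `L¹` and `Lᵠ` norms. -/
lemma sum_sq_rpow_le (s : Finset α) (g : α → ℝ) {q : ℝ} (hq : 2 ≤ q) :
    (∑ x ∈ s, g x ^ 2) ^ (q - 1) ≤ (∑ x ∈ s, |g x|) ^ (q - 2) * ∑ x ∈ s, |g x| ^ q := by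
  have hq1 : 0 < q - 1 := by linarith
  have h := inner_le_weight_mul_Lp_of_nonneg s (p := q - 1) (by linarith) (fun x => |g x|)
    (fun x => |g x|) (fun _ => abs_nonneg _) (fun _ => abs_nonneg _)
  simp only [← sq, sq_abs, ← rpow_one_add' (abs_nonneg _) (by linarith : 1 + (q - 1) ≠ 0),
    add_sub_cancel] at h
  have hM1 : 0 ≤ ∑ x ∈ s, |g x| := sum_nonneg fun _ _ => abs_nonneg _
  have hMq : 0 ≤ ∑ x ∈ s, |g x| ^ q := sum_nonneg fun _ _ => by positivity
  calc _ ≤ ((∑ x ∈ s, |g x|) ^ (1 - (q - 1)⁻¹) * (∑ x ∈ s, |g x| ^ q) ^ (q - 1)⁻¹) ^ (q - 1) :=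
        rpow_le_rpow (sum_nonneg fun _ _ => sq_nonneg _) h hq1.le
    _ = _ := by
        rw [mul_rpow (by positivity) (by positivity), ← rpow_mul hM1, rpow_inv_rpow hMq hq1.ne']
        congr 2
        field_simp
        ring

lemma mul_card_le_sq_sum_abs_mul_rpow {q K : ℝ} (hq : 2 < q) (hK : 0 < K)
    (hne : ∃ x ∈ s, g x ≠ 0)
    (hmom : ∑ x ∈ s, |g x| ^ q ≤ #s * (K * (∑ x ∈ s, g x ^ 2) / #s) ^ (q / 2)) :
    (∑ x ∈ s, g x ^ 2) * #s ≤ (∑ x ∈ s, |g x|) ^ 2 * K ^ (q / (q - 2)) := by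
  obtain ⟨x₀, hx₀, hgx₀⟩ := hne
  have hW : (0 : ℝ) < #s := Nat.cast_pos.2 (card_pos.2 ⟨x₀, hx₀⟩)
  have hM2 : 0 < ∑ x ∈ s, g x ^ 2 := sum_pos' (fun _ _ => sq_nonneg _) ⟨x₀, hx₀, by positivity⟩
  have hM1 : 0 < ∑ x ∈ s, |g x| := sum_pos' (fun _ _ => abs_nonneg _) ⟨x₀, hx₀, by positivity⟩
  have hMq : 0 < ∑ x ∈ s, |g x| ^ q :=
    sum_pos' (fun _ _ => by positivity) ⟨x₀, hx₀, by have := abs_pos.2 hgx₀; positivity⟩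
  -- in logarithms, Hölder's inequality and the moment bound are linear
  have h := log_le_log (by positivity)
    ((sum_sq_rpow_le s g hq.le).trans (mul_le_mul_of_nonneg_left hmom (by positivity)))
  rw [log_rpow hM2, log_mul (by positivity) (by positivity), log_rpow hM1,
    log_mul (by positivity) (by positivity), log_rpow (by positivity),
    log_div (by positivity) (by positivity), log_mul (by positivity) (by positivity)] at h
  rw [← log_le_log_iff (by positivity) (by positivity), log_mul (by positivity) (by positivity),
    log_mul (by positivity) (by positivity), log_pow, log_rpow hK, div_mul_eq_mul_div,
    ← sub_le_iff_le_add', le_div_iff₀ (by linarith), Nat.cast_ofNat]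
  linear_combination 2 * h

theorem card_le_four_mul_rpow_mul_card_pos {q K : ℝ} (hq : 2 < q) (hK : 0 < K)
    (hg : ∑ x ∈ s, g x = 0) (hne : ∃ x ∈ s, g x ≠ 0)
    (hmom : ∑ x ∈ s, |g x| ^ q ≤ #s * (K * (∑ x ∈ s, g x ^ 2) / #s) ^ (q / 2)) :
    (#s : ℝ) ≤ 4 * K ^ (q / (q - 2)) * #{x ∈ s | 0 < g x} := by
  have hL1 := mul_card_le_sq_sum_abs_mul_rpow hq hK hne hmom
  have hCS := sq_sum_filter_pos_le s g
  have hM1 : 0 < ∑ x ∈ s, |g x| := by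
    obtain ⟨x₀, hx₀, hgx₀⟩ := hne
    exact sum_pos' (fun _ _ => abs_nonneg _) ⟨x₀, hx₀, abs_pos.2 hgx₀⟩
  rw [sum_abs_eq_two_mul_sum_filter_pos hg] at hL1 hM1
  set m := ∑ x ∈ s with 0 < g x, g x
  have hm : 0 < m ^ 2 := pow_pos (by linarith) 2
  refine le_of_mul_le_mul_left ?_ hm
  calc m ^ 2 * #s ≤ #{x ∈ s | 0 < g x} * (∑ x ∈ s, g x ^ 2) * #s := by gcongr
    _ ≤ #{x ∈ s | 0 < g x} * ((2 * m) ^ 2 * K ^ (q / (q - 2))) := by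
        rw [mul_assoc]
        gcongr
    _ = m ^ 2 * (4 * K ^ (q / (q - 2)) * #{x ∈ s | 0 < g x}) := by ring

end Anticoncentration

lemma sub_one_pow_rpow_le_exp {q : ℝ} (hq : 2 < q) (a : ℕ) :
    ((q - 1) ^ a) ^ (q / (q - 2)) ≤ exp (q * a) := by
  have hq1 : 0 < q - 1 := by linarith
  rw [rpow_def_of_pos (pow_pos hq1 a), log_pow, exp_le_exp]
  calc a * log (q - 1) * (q / (q - 2)) ≤ a * (q - 2) * (q / (q - 2)) := by
        gcongr
        linarith [log_le_sub_one_of_pos hq1]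
    _ = q * a := by field_simp [(by linarith : q - 2 ≠ 0)]

section Walsh

variable {ι : Type*} [DecidableEq ι]

/- A point of `{-1, 1}^ι` is encoded by the set `T` of its `-1` coordinates; `walsh S T` is the
character `χ_S` at that point. -/
def signVector (T : Finset ι) (i : ι) : ℝ := if i ∈ T then -1 else 1

def walsh (S T : Finset ι) : ℝ := ∏ i ∈ S, signVector T i

def fourierSum (u : Finset ι) (d : Finset ι → ℝ) (T : Finset ι) : ℝ :=
  ∑ S ∈ u.powerset, d S * walsh S T

@[simp] lemma walsh_empty (T : Finset ι) : walsh ∅ T = 1 := prod_empty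

lemma walsh_insert_right_of_notMem {i : ι} {S : Finset ι} (hi : i ∉ S) (T : Finset ι) :
    walsh S (insert i T) = walsh S T :=
  prod_congr rfl fun j hj => by
    simp [signVector, show j ≠ i from fun h => hi (h ▸ hj)]

lemma walsh_insert_left_of_notMem {i : ι} {S T : Finset ι} (hiS : i ∉ S) (hiT : i ∉ T) :
    walsh (insert i S) T = walsh S T := by
  rw [walsh, prod_insert hiS, signVector, if_neg hiT, one_mul, walsh]

lemma walsh_insert_insert {i : ι} {S : Finset ι} (hi : i ∉ S) (T : Finset ι) :
    walsh (insert i S) (insert i T) = -walsh S T := by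
  rw [walsh, prod_insert hi, signVector, if_pos (mem_insert_self i T), ← walsh,
    walsh_insert_right_of_notMem hi, neg_one_mul]

lemma fourierSum_empty (d : Finset ι → ℝ) (T : Finset ι) : fourierSum ∅ d T = d ∅ := by
  simp [fourierSum]

lemma fourierSum_smul_congr {u : Finset ι} {d e : Finset ι → ℝ} (r : ℝ)
    (h : ∀ S ⊆ u, d S = r * e S) (T : Finset ι) :
    fourierSum u d T = r * fourierSum u e T := by
  rw [fourierSum, fourierSum, mul_sum]
  exact sum_congr rfl fun S hS => by rw [h S (mem_powerset.1 hS), mul_assoc]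

lemma fourierSum_insert {i : ι} {u : Finset ι} (hi : i ∉ u) (d : Finset ι → ℝ) {T : Finset ι}
    (hiT : i ∉ T) :
    fourierSum (insert i u) d T
      = fourierSum u d T + fourierSum u (fun S => d (insert i S)) T := by
  rw [fourierSum, sum_powerset_insert hi]
  congr 1
  exact sum_congr rfl fun S hS => by
    rw [walsh_insert_left_of_notMem (fun h => hi (mem_powerset.1 hS h)) hiT]

lemma fourierSum_insert_insert {i : ι} {u : Finset ι} (hi : i ∉ u) (d : Finset ι → ℝ)
    (T : Finset ι) :
    fourierSum (insert i u) d (insert i T)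
      = fourierSum u d T - fourierSum u (fun S => d (insert i S)) T := by
  rw [fourierSum, sum_powerset_insert hi, sub_eq_add_neg, fourierSum, fourierSum,
    ← sum_neg_distrib]
  congr 1 <;> refine sum_congr rfl fun S hS => ?_
  · rw [walsh_insert_right_of_notMem (fun h => hi (mem_powerset.1 hS h))]
  · rw [walsh_insert_insert (fun h => hi (mem_powerset.1 hS h)), mul_neg]

lemma sum_comp_fourierSum_insert {i : ι} {u : Finset ι} (hi : i ∉ u) (Φ : ℝ → ℝ)
    (d : Finset ι → ℝ) :
    ∑ T ∈ (insert i u).powerset, Φ (fourierSum (insert i u) d T)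
      = ∑ T ∈ u.powerset, (Φ (fourierSum u d T + fourierSum u (fun S => d (insert i S)) T)
          + Φ (fourierSum u d T - fourierSum u (fun S => d (insert i S)) T)) := by
  rw [sum_powerset_insert hi, ← sum_add_distrib]
  exact sum_congr rfl fun T hT => by
    rw [fourierSum_insert hi d (fun h => hi (mem_powerset.1 hT h)), fourierSum_insert_insert hi]

lemma sum_powerset_fourierSum (u : Finset ι) (d : Finset ι → ℝ) :
    ∑ T ∈ u.powerset, fourierSum u d T = 2 ^ #u * d ∅ := by
  induction u using Finset.induction_on generalizing d with
  | empty => simp [fourierSum_empty]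
  | insert i u hi ih =>
    refine (sum_comp_fourierSum_insert hi id d).trans ?_
    simp only [id, add_add_sub_cancel, ← two_mul, ← mul_sum, ih, card_insert_of_notMem hi, pow_succ]
    ring

lemma sum_powerset_fourierSum_sq (u : Finset ι) (d : Finset ι → ℝ) :
    ∑ T ∈ u.powerset, fourierSum u d T ^ 2 = 2 ^ #u * ∑ S ∈ u.powerset, d S ^ 2 := by
  induction u using Finset.induction_on generalizing d with
  | empty => simp [fourierSum_empty]
  | insert i u hi ih =>
    have hpar : ∀ x y : ℝ, (x + y) ^ 2 + (x - y) ^ 2 = 2 * (x ^ 2 + y ^ 2) := fun x y => by ring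
    refine (sum_comp_fourierSum_insert hi (· ^ 2) d).trans ?_
    simp only [hpar]
    rw [← mul_sum, sum_add_distrib, ih, ih, sum_powerset_insert hi, card_insert_of_notMem hi,
      pow_succ]
    ring

variable {q : ℝ}

/-- Hypercontractivity `‖T_ρ h‖_q ≤ ‖h‖_2` of the noise operator `T_ρ`, for `ρ ≤ 1 / √(q - 1)`. -/
theorem sum_abs_fourierSum_rpow_le (hq2 : 2 ≤ q) (hq3 : q ≤ 3) {ρ : ℝ} (hρ : ρ ^ 2 * (q - 1) ≤ 1)
    (u : Finset ι) (b : Finset ι → ℝ) :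
    ∑ T ∈ u.powerset, |fourierSum u (fun S => ρ ^ #S * b S) T| ^ q
      ≤ 2 ^ #u * (∑ S ∈ u.powerset, b S ^ 2) ^ (q / 2) := by
  induction u using Finset.induction_on generalizing b with
  | empty => simp [fourierSum_empty, sq_rpow_half]
  | insert i u hi ih =>
    have hB : ∀ T, fourierSum u (fun S => ρ ^ #(insert i S) * b (insert i S)) T
        = ρ * fourierSum u (fun S => ρ ^ #S * b (insert i S)) T :=
      fourierSum_smul_congr ρ fun S hS => by
        rw [card_insert_of_notMem (fun h => hi (hS h)), pow_succ]
        ring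
    refine (sum_comp_fourierSum_insert hi (|·| ^ q) _).trans_le ?_
    simp only [hB]
    calc _ ≤ ∑ T ∈ u.powerset, 2 * (fourierSum u (fun S => ρ ^ #S * b S) T ^ 2
            + fourierSum u (fun S => ρ ^ #S * b (insert i S)) T ^ 2) ^ (q / 2) :=
          sum_le_sum fun T _ => two_point_of_sq_mul_le hq2 hq3 hρ _ _
      _ ≤ 2 * (2 ^ #u * (∑ S ∈ u.powerset, b S ^ 2
            + ∑ S ∈ u.powerset, b (insert i S) ^ 2) ^ (q / 2)) := by
          rw [← mul_sum]
          gcongr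
          exact sum_sq_add_sq_rpow_le hq2 (by positivity) (sum_nonneg fun _ _ => sq_nonneg _)
            (sum_nonneg fun _ _ => sq_nonneg _) (ih b) (ih fun S => b (insert i S))
      _ = _ := by
          rw [sum_powerset_insert hi, card_insert_of_notMem hi, pow_succ]
          ring

theorem sum_abs_fourierSum_rpow_le_of_degree_le (hq2 : 2 ≤ q) (hq3 : q ≤ 3) (u : Finset ι)
    {d : Finset ι → ℝ} {a : ℕ} (hdeg : ∀ S, d S ≠ 0 → #S ≤ a) :
    ∑ T ∈ u.powerset, |fourierSum u d T| ^ q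
      ≤ 2 ^ #u * ((q - 1) ^ a * ∑ S ∈ u.powerset, d S ^ 2) ^ (q / 2) := by
  set r := √(q - 1)
  have hr : 0 < r := sqrt_pos.2 (by linarith)
  have hr2 : r ^ 2 = q - 1 := sq_sqrt (by linarith)
  have hd : (fun S => r⁻¹ ^ #S * (r ^ #S * d S)) = d := funext fun S => by
    rw [← mul_assoc, ← mul_pow, inv_mul_cancel₀ hr.ne', one_pow, one_mul]
  have hcoeff : ∀ S, (r ^ #S * d S) ^ 2 ≤ (q - 1) ^ a * d S ^ 2 := fun S => by
    rw [mul_pow, ← pow_mul, mul_comm #S, pow_mul, hr2]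
    rcases eq_or_ne (d S) 0 with hS | hS
    · simp [hS]
    · gcongr
      · linarith
      · exact hdeg S hS
  calc _ = ∑ T ∈ u.powerset, |fourierSum u (fun S => r⁻¹ ^ #S * (r ^ #S * d S)) T| ^ q := by
        rw [hd]
    _ ≤ 2 ^ #u * (∑ S ∈ u.powerset, (r ^ #S * d S) ^ 2) ^ (q / 2) :=
        sum_abs_fourierSum_rpow_le hq2 hq3 (by rw [inv_pow, hr2, inv_mul_cancel₀ (by linarith)]) u _
    _ ≤ _ := by
        rw [mul_sum]
        gcongr with S
        exact hcoeff S

theorem two_pow_card_le_mul_card_fourierSum_pos (u : Finset ι) {d : Finset ι → ℝ} {a : ℕ}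
    (hdeg : ∀ S, d S ≠ 0 → #S ≤ a) (hd : d ∅ = 0)
    (hne : ∃ T ∈ u.powerset, fourierSum u d T ≠ 0) :
    (2 : ℝ) ^ #u ≤ 4 * exp (2 * a) * #{T ∈ u.powerset | 0 < fourierSum u d T} := by
  have hq : ∀ q ∈ Set.Ioc (2 : ℝ) 3,
      (2 : ℝ) ^ #u ≤ 4 * exp (q * a) * #{T ∈ u.powerset | 0 < fourierSum u d T} := by
    intro q hq
    have hmom := sum_abs_fourierSum_rpow_le_of_degree_le hq.1.le hq.2 u hdeg
    calc (2 : ℝ) ^ #u = #u.powerset := by simp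
      _ ≤ 4 * ((q - 1) ^ a) ^ (q / (q - 2)) * #{T ∈ u.powerset | 0 < fourierSum u d T} :=
          card_le_four_mul_rpow_mul_card_pos hq.1 (pow_pos (by linarith [hq.1]) a)
            (by rw [sum_powerset_fourierSum, hd, mul_zero]) hne
            (hmom.trans_eq <| by
              rw [card_powerset, sum_powerset_fourierSum_sq]
              push_cast
              field_simp)
      _ ≤ 4 * exp (q * a) * #{T ∈ u.powerset | 0 < fourierSum u d T} := by
          gcongr
          exact sub_one_pow_rpow_le_exp hq.1 a
  have hlim : Filter.Tendsto
      (fun q : ℝ => 4 * exp (q * a) * #{T ∈ u.powerset | 0 < fourierSum u d T})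
      (𝓝[>] 2) (𝓝 (4 * exp (2 * a) * #{T ∈ u.powerset | 0 < fourierSum u d T})) :=
    ((by fun_prop : Continuous fun q : ℝ => 4 * exp (q * a) * _).tendsto 2).mono_left
      nhdsWithin_le_nhds
  exact ge_of_tendsto hlim (Filter.eventually_of_mem (Ioc_mem_nhdsGT (by norm_num)) hq)

lemma signVector_injective : Function.Injective (signVector : Finset ι → ι → ℝ) := by
  intro T T' h
  ext i
  have hmem : ∀ T : Finset ι, i ∈ T ↔ signVector T i = -1 := fun T => by
    by_cases hi : i ∈ T <;> norm_num [signVector, hi]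
  rw [hmem, hmem, h]

lemma piFinset_neg_one_one_eq_map [Fintype ι] :
    Fintype.piFinset (fun _ : ι => ({-1, 1} : Finset ℝ))
      = univ.map ⟨signVector, signVector_injective⟩ := by
  ext x
  simp only [Fintype.mem_piFinset, mem_insert, mem_singleton, mem_map, mem_univ, true_and,
    Function.Embedding.coeFn_mk]
  constructor
  · intro hx
    refine ⟨({i | x i = -1} : Finset ι), funext fun i => ?_⟩
    rcases hx i with h | h <;> norm_num [signVector, h]
  · rintro ⟨T, rfl⟩ i
    by_cases h : i ∈ T <;> simp [signVector, h]

lemma fourierSum_univ [Fintype ι] (d : Finset ι → ℝ) (T : Finset ι) :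
    fourierSum univ d T = ∑ S, d S * ∏ i ∈ S, signVector T i := by
  rw [fourierSum, powerset_univ]
  rfl

lemma fourierSum_eq_add_update (u : Finset ι) (d : Finset ι → ℝ) (T : Finset ι) :
    fourierSum u d T = d ∅ + fourierSum u (Function.update d ∅ 0) T := by
  rw [fourierSum, fourierSum, ← add_sum_erase _ _ (empty_mem_powerset u),
    ← add_sum_erase _ _ (empty_mem_powerset u)]
  simp only [walsh_empty, Function.update_self, zero_add, mul_one]
  congr 1
  exact sum_congr rfl fun S hS => by rw [Function.update_of_ne (ne_of_mem_erase hS)]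

end Walsh

end BooleanCube

open BooleanCube

/-- **Anticoncentration for low-degree functions on the Boolean cube**
(Theorem 9.24 of O'Donnell, *Analysis of Boolean Functions*).
Let `f : {−1,1}ⁿ → ℝ` be a nonconstant function whose multilinear (Fourier) expansion
`f(x) = Σ_S c_S ∏_{i∈S} x_i` has degree at most `a`.  Then, under the uniform distribution
on `{−1,1}ⁿ`, `Pr[f(x) > E[f]] ≥ 1/(4 e^{2a})`. -/
theorem boolean_cube_anticoncentration
    (n a : ℕ) (c : Finset (Fin n) → ℝ)
    (hdeg : ∀ S : Finset (Fin n), c S ≠ 0 → S.card ≤ a)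
    (f : (Fin n → ℝ) → ℝ)
    (hf : ∀ x, f x = ∑ S : Finset (Fin n), c S * ∏ i ∈ S, x i)
    (cube : Finset (Fin n → ℝ))
    (hcube : cube = Fintype.piFinset fun _ : Fin n => ({-1, 1} : Finset ℝ))
    (hnonconst : ∃ x ∈ cube, ∃ y ∈ cube, f x ≠ f y) :
    1 / (4 * Real.exp (2 * a))
      ≤ ((cube.filter fun x => (∑ y ∈ cube, f y) / 2 ^ n < f x).card : ℝ) / 2 ^ n := by
  classical
  set d := Function.update c ∅ 0
  have hfd : ∀ T, f (signVector T) = c ∅ + fourierSum univ d T := fun T => by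
    rw [hf, ← fourierSum_univ, fourierSum_eq_add_update]
  have hmean : (∑ y ∈ cube, f y) / 2 ^ n = c ∅ := by
    simp only [hcube, piFinset_neg_one_one_eq_map, sum_map, Function.Embedding.coeFn_mk, hf,
      ← fourierSum_univ]
    rw [← powerset_univ, sum_powerset_fourierSum, card_univ, Fintype.card_fin]
    field_simp
  obtain ⟨T, hT⟩ : ∃ T, fourierSum univ d T ≠ 0 := by
    by_contra! h
    obtain ⟨x, hx, y, hy, hxy⟩ := hnonconst
    simp only [hcube, piFinset_neg_one_one_eq_map, mem_map, mem_univ, true_and,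
      Function.Embedding.coeFn_mk] at hx hy
    obtain ⟨⟨Tx, rfl⟩, ⟨Ty, rfl⟩⟩ := And.intro hx hy
    exact hxy (by rw [hfd, hfd, h, h])
  have hdeg' : ∀ S, d S ≠ 0 → #S ≤ a := fun S hS =>
    hdeg S fun hc => hS (by simp [d, Function.update_apply, hc])
  have hmain := two_pow_card_le_mul_card_fourierSum_pos univ hdeg' (Function.update_self ..)
    ⟨T, mem_powerset.2 (subset_univ T), hT⟩
  have hcard : #{x ∈ cube | c ∅ < f x}
      = #{T ∈ (univ : Finset (Fin n)).powerset | 0 < fourierSum univ d T} := by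
    simp only [hcube, piFinset_neg_one_one_eq_map, filter_map, card_map, powerset_univ,
      Function.comp_def, Function.Embedding.coeFn_mk, hfd, lt_add_iff_pos_right]
  rw [hmean, div_le_div_iff₀ (by positivity) (by positivity), one_mul, hcard]
  rw [card_fin] at hmain
  linarith
end

section
/- Let G(V,E) be a finite hypergraph in which every hyperedge contains at least 2 vertices and every vertex lies in at most d ≥ 1 hyperedges, and let u : E → ℝ satisfy |u_R| ≤ 1 for all R ∈ E. Then Σ_{i∈V} √( Σ_{R∈E, i∈R} u_R² ) ≥ (2/√d) · Σ_{R∈E} u_R². -/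
/-- **Cauchy–Schwarz-type degree bound for hypergraphs.**
Let `G(V,E)` be a finite hypergraph in which every hyperedge has at least `2` vertices and
every vertex lies in at most `d ≥ 1` hyperedges, and let `u : E → ℝ` with `|u_R| ≤ 1`.  Then
`Σ_{i∈V} √(Σ_{R∋i} u_R²) ≥ (2/√d) Σ_{R∈E} u_R²`. -/
theorem hypergraph_degree_bound
    {V : Type*} [Fintype V] [DecidableEq V]
    (E : Finset (Finset V)) (d : ℕ) (hd : 1 ≤ d)
    (hcard : ∀ R ∈ E, 2 ≤ R.card)
    (hdeg : ∀ i : V, (E.filter fun R => i ∈ R).card ≤ d)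
    (u : Finset V → ℝ) (hu : ∀ R ∈ E, |u R| ≤ 1) :
    (2 / Real.sqrt d) * ∑ R ∈ E, (u R) ^ 2
      ≤ ∑ i : V, Real.sqrt (∑ R ∈ E.filter (fun R => i ∈ R), (u R) ^ 2) := by
  have hdpos : (0:ℝ) < Real.sqrt d := Real.sqrt_pos.2 (by exact_mod_cast hd)
  set S : V → ℝ := fun i => ∑ R ∈ E.filter (fun R => i ∈ R), (u R) ^ 2 with hS
  have hSnonneg : ∀ i, 0 ≤ S i := fun i =>
    Finset.sum_nonneg fun R _ => sq_nonneg _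
  have hSle : ∀ i, S i ≤ d := by
    intro i
    calc S i ≤ ∑ R ∈ E.filter (fun R => i ∈ R), 1 := by
          apply Finset.sum_le_sum
          intro R hR
          have := hu R (Finset.mem_of_mem_filter R hR)
          nlinarith [abs_nonneg (u R), sq_abs (u R)]
      _ = (E.filter fun R => i ∈ R).card := by simp
      _ ≤ d := by exact_mod_cast hdeg i
  -- step 1 : S i / √d ≤ √(S i)
  have step1 : ∀ i, S i / Real.sqrt d ≤ Real.sqrt (S i) := by
    intro i
    rw [div_le_iff₀ hdpos]
    calc S i = Real.sqrt (S i) * Real.sqrt (S i) := (Real.mul_self_sqrt (hSnonneg i)).symm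
      _ ≤ Real.sqrt (S i) * Real.sqrt d := by
          apply mul_le_mul_of_nonneg_left _ (Real.sqrt_nonneg _)
          exact Real.sqrt_le_sqrt (hSle i)
  -- step 2 : ∑ i, S i = ∑ R ∈ E, R.card * u R ^ 2
  have step2 : ∑ i : V, S i = ∑ R ∈ E, (R.card : ℝ) * (u R) ^ 2 := by
    simp only [hS, Finset.sum_filter]
    rw [Finset.sum_comm]
    congr 1
    ext R
    simp [Finset.sum_ite_eq', Finset.sum_boole, mul_comm]
  have step3 : (2 / Real.sqrt d) * ∑ R ∈ E, (u R) ^ 2 ≤ (∑ i : V, S i) / Real.sqrt d := by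
    rw [div_mul_eq_mul_div, step2]
    apply div_le_div_of_nonneg_right _ hdpos.le
    rw [Finset.mul_sum]
    apply Finset.sum_le_sum
    intro R hR
    have h2 : (2:ℝ) ≤ R.card := by exact_mod_cast hcard R hR
    nlinarith [sq_nonneg (u R)]
  calc (2 / Real.sqrt d) * ∑ R ∈ E, (u R) ^ 2 ≤ (∑ i : V, S i) / Real.sqrt d := step3
    _ = ∑ i : V, S i / Real.sqrt d := Finset.sum_div _ _ _
    _ ≤ ∑ i : V, Real.sqrt (S i) := Finset.sum_le_sum fun i _ => step1 i
end

section
/- Let H and F be Hermitian matrices over ℂ and let ψ be a unit vector with Fψ = 0. Set A = i[H,F] = i(HF − FH), which is Hermitian, and define g : ℝ → ℝ by g(θ) = ⟨exp(−iθA)ψ, H exp(−iθA)ψ⟩. Then g is differentiable at 0 with g'(0) = −2·⟨ψ, H F H ψ⟩. In particular, if additionally F ⪰ I − |ψ⟩⟨ψ|, then g'(0) ≤ −2·Var_ψ(H), where Var_ψ(H) = ⟨ψ, H²ψ⟩ − ⟨ψ, Hψ⟩². -/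
/-!
Since `-iA = [H,F]`, the circuit is `e^{θB}` with `B = HF - FH`, so
`g'(0) = Re (⟨Bψ, Hψ⟩ + ⟨ψ, HBψ⟩)`. As `Fψ = 0`, `Bψ = -FHψ`, and both terms equal
`-⟨ψ, HFHψ⟩`. For the bound, test `F ⪰ I - |ψ⟩⟨ψ|` on `Hψ`:
`⟨Hψ, FHψ⟩ ≥ ‖Hψ‖² - |⟨ψ, Hψ⟩|² = Var_ψ(H)`.
-/

open Matrix
open scoped ComplexOrder

namespace Matrix

variable {ι : Type*} [Fintype ι]

theorem star_mulVec_dotProduct {m α : Type*} [Fintype m] [CommSemiring α] [StarRing α]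
    (M : Matrix m ι α) (x : ι → α) (y : m → α) :
    star (M *ᵥ x) ⬝ᵥ y = star x ⬝ᵥ Mᴴ *ᵥ y := by
  rw [star_mulVec, ← dotProduct_mulVec]

theorem IsHermitian.smul_I_commutator {H F : Matrix ι ι ℂ} (hH : H.IsHermitian)
    (hF : F.IsHermitian) : (Complex.I • (H * F - F * H)).IsHermitian := by
  rw [IsHermitian, conjTranspose_smul, conjTranspose_sub, conjTranspose_mul, conjTranspose_mul,
    hH.eq, hF.eq, Complex.star_def, Complex.conj_I, ← neg_sub, smul_neg, neg_smul, neg_neg]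

theorem hasDerivAt_star_dotProduct_mulVec {𝕜 : Type*} [RCLike 𝕜] (H : Matrix ι ι 𝕜)
    {u : ℝ → ι → 𝕜} {u' : ι → 𝕜} {t : ℝ} (hu : HasDerivAt u u' t) :
    HasDerivAt (fun s => star (u s) ⬝ᵥ H *ᵥ u s)
      (star u' ⬝ᵥ H *ᵥ u t + star (u t) ⬝ᵥ H *ᵥ u') t := by
  have hcoord := hasDerivAt_pi.1 hu
  have hHu : HasDerivAt (fun s => H *ᵥ u s) (H *ᵥ u') t := hasDerivAt_pi.2 fun i => by
    simpa only [mulVec, dotProduct] using HasDerivAt.fun_sum fun j _ => (hcoord j).const_mul (H i j)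
  simpa only [dotProduct, Pi.star_apply, Finset.sum_add_distrib] using
    HasDerivAt.fun_sum (u := Finset.univ) fun i _ => (hcoord i).star.fun_mul (hasDerivAt_pi.1 hHu i)

section Exp

variable [DecidableEq ι]

attribute [local instance] Matrix.linftyOpNormedRing Matrix.linftyOpNormedAlgebra

theorem hasDerivAt_exp_smul_mulVec (B : Matrix ι ι ℂ) (v : ι → ℂ) (t : ℝ) :
    HasDerivAt (fun s : ℝ => NormedSpace.exp (s • B) *ᵥ v)
      ((NormedSpace.exp (t • B) * B) *ᵥ v) t :=
  let L : Matrix ι ι ℂ →L[ℝ] ι → ℂ := ((mulVecBilin ℝ ℝ).flip v).toContinuousLinearMap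
  L.hasFDerivAt.comp_hasDerivAt t (hasDerivAt_exp_smul_const B t)

theorem hasDerivAt_re_star_dotProduct_exp_smul (H B : Matrix ι ι ℂ) (v : ι → ℂ) :
    HasDerivAt
      (fun s : ℝ => (star (NormedSpace.exp (s • B) *ᵥ v) ⬝ᵥ H *ᵥ NormedSpace.exp (s • B) *ᵥ v).re)
      (star (B *ᵥ v) ⬝ᵥ H *ᵥ v + star v ⬝ᵥ H *ᵥ B *ᵥ v).re 0 := by
  have h := Complex.reCLM.hasFDerivAt.comp_hasDerivAt 0
    (hasDerivAt_star_dotProduct_mulVec H (hasDerivAt_exp_smul_mulVec B v 0))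
  simp only [zero_smul, NormedSpace.exp_zero, one_mul, one_mulVec] at h
  exact h

end Exp

theorem IsHermitian.star_commutator_mulVec_dotProduct_add {H F : Matrix ι ι ℂ}
    (hH : H.IsHermitian) (hF : F.IsHermitian) {ψ : ι → ℂ} (hker : F *ᵥ ψ = 0) :
    star ((H * F - F * H) *ᵥ ψ) ⬝ᵥ H *ᵥ ψ + star ψ ⬝ᵥ H *ᵥ (H * F - F * H) *ᵥ ψ
      = -2 * (star ψ ⬝ᵥ (H * F * H) *ᵥ ψ) := by
  have hB : (H * F - F * H) *ᵥ ψ = -(F *ᵥ H *ᵥ ψ) := by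
    rw [sub_mulVec, ← mulVec_mulVec, ← mulVec_mulVec, hker, mulVec_zero, zero_sub]
  rw [hB, star_neg, neg_dotProduct, mulVec_neg, dotProduct_neg, star_mulVec_dotProduct,
    star_mulVec_dotProduct, hF.eq, hH.eq]
  simp only [mulVec_mulVec, Matrix.mul_assoc]
  ring

theorem PosSemidef.re_dotProduct_sub_normSq_le [DecidableEq ι] {F : Matrix ι ι ℂ} {ψ : ι → ℂ}
    (hP : (F - (1 - vecMulVec ψ (star ψ))).PosSemidef) (x : ι → ℂ) :
    (star x ⬝ᵥ x).re - Complex.normSq (star ψ ⬝ᵥ x) ≤ (star x ⬝ᵥ F *ᵥ x).re := by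
  have h := hP.dotProduct_mulVec_nonneg x
  rw [sub_mulVec, sub_mulVec, one_mulVec, vecMulVec_mulVec, dotProduct_sub, dotProduct_sub,
    op_smul_eq_smul, dotProduct_smul, smul_eq_mul, star_dotProduct x ψ, Complex.star_def,
    Complex.mul_conj] at h
  have h_re := (Complex.le_def.1 h).1
  simp only [Complex.zero_re, Complex.sub_re, Complex.ofReal_re] at h_re
  linarith

end Matrix

theorem deep_circuit_energy_derivative_general
    {ι : Type*} [Fintype ι] [DecidableEq ι]
    (H F : Matrix ι ι ℂ) (hH : H.IsHermitian) (hF : F.IsHermitian)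
    (ψ : ι → ℂ) (hker : F *ᵥ ψ = 0)
    (A : Matrix ι ι ℂ) (hA : A = Complex.I • (H * F - F * H))
    (g : ℝ → ℝ)
    (hg : ∀ θ : ℝ,
      g θ = (star (NormedSpace.exp ((-(Complex.I * θ)) • A) *ᵥ ψ)
              ⬝ᵥ H *ᵥ (NormedSpace.exp ((-(Complex.I * θ)) • A) *ᵥ ψ)).re) :
    A.IsHermitian ∧
    HasDerivAt g (-2 * (star ψ ⬝ᵥ (H * F * H) *ᵥ ψ).re) 0 ∧
    ((F - (1 - vecMulVec ψ (star ψ))).PosSemidef →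
      -2 * (star ψ ⬝ᵥ (H * F * H) *ᵥ ψ).re
        ≤ -2 * ((star ψ ⬝ᵥ (H * H) *ᵥ ψ).re - ((star ψ ⬝ᵥ H *ᵥ ψ).re) ^ 2)) := by
  refine ⟨hA ▸ hH.smul_I_commutator hF, ?_, fun hP => ?_⟩
  · have h_circuit (θ : ℝ) : (-(Complex.I * θ)) • A = θ • (H * F - F * H) := by
      rw [hA, smul_smul, ← Complex.coe_smul, neg_mul, mul_right_comm, Complex.I_mul_I, neg_one_mul,
        neg_neg]
    have hg' : g = fun θ : ℝ => (star (NormedSpace.exp (θ • (H * F - F * H)) *ᵥ ψ)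
        ⬝ᵥ H *ᵥ NormedSpace.exp (θ • (H * F - F * H)) *ᵥ ψ).re := by
      funext θ
      rw [hg, h_circuit]
    have h := hasDerivAt_re_star_dotProduct_exp_smul H (H * F - F * H) ψ
    have h_re (z : ℂ) : (-2 * z).re = -2 * z.re := by simp
    rwa [hH.star_commutator_mulVec_dotProduct_add hF hker, h_re, ← hg'] at h
  · have h := hP.re_dotProduct_sub_normSq_le (H *ᵥ ψ)
    have h_im : (star ψ ⬝ᵥ H *ᵥ ψ).im = 0 := hH.im_star_dotProduct_mulVec_self ψ
    rw [star_mulVec_dotProduct, star_mulVec_dotProduct, hH.eq, Complex.normSq_apply, h_im] at h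
    simp only [mulVec_mulVec, Matrix.mul_assoc] at h ⊢
    nlinarith

/-- **First-order energy decrease of the deep approximation circuit.**
Let `H, F` be Hermitian matrices over `ℂ` and `ψ` a unit vector with `F ψ = 0`.  Set
`A = i[H,F]`, which is Hermitian, and let `g(θ) = ⟨e^{−iθA} ψ| H |e^{−iθA} ψ⟩`.  Then `g` is
differentiable at `0` with `g'(0) = −2 ⟨ψ| H F H |ψ⟩`; in particular, if moreover
`F ⪰ I − |ψ⟩⟨ψ|`, then `g'(0) ≤ −2 Var_ψ(H)` with `Var_ψ(H) = ⟨ψ|H²|ψ⟩ − ⟨ψ|H|ψ⟩²`. -/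
theorem deep_circuit_energy_derivative
    {ι : Type*} [Fintype ι] [DecidableEq ι]
    (H F : Matrix ι ι ℂ) (hH : H.IsHermitian) (hF : F.IsHermitian)
    (ψ : ι → ℂ) (hψ : ∑ x, ‖ψ x‖ ^ 2 = 1) (hker : F *ᵥ ψ = 0)
    (A : Matrix ι ι ℂ) (hA : A = Complex.I • (H * F - F * H))
    (g : ℝ → ℝ)
    (hg : ∀ θ : ℝ,
      g θ = (star (NormedSpace.exp ((-(Complex.I * θ)) • A) *ᵥ ψ)
              ⬝ᵥ H *ᵥ (NormedSpace.exp ((-(Complex.I * θ)) • A) *ᵥ ψ)).re) :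
    A.IsHermitian ∧
    HasDerivAt g (-2 * (star ψ ⬝ᵥ (H * F * H) *ᵥ ψ).re) 0 ∧
    ((F - (1 - vecMulVec ψ (star ψ))).PosSemidef →
      -2 * (star ψ ⬝ᵥ (H * F * H) *ᵥ ψ).re
        ≤ -2 * ((star ψ ⬝ᵥ (H * H) *ᵥ ψ).re - ((star ψ ⬝ᵥ H *ᵥ ψ).re) ^ 2)) :=
  deep_circuit_energy_derivative_general H F hH hF ψ hker A hA g hg
end

section
/- Fix a vertex i of a finite set V and let B be a finite family of pairwise distinct finite subsets R ⊆ V, each containing i and at least one other vertex, with |R| ≤ k for every R ∈ B, and let u : B → ℝ with Σ_{R∈B} u_R² > 0. Let (r_j)_{j ∈ V\{i}} be i.i.d. random variables uniformly distributed on [−1,1], and set ξ = Σ_{R∈B} u_R · ∏_{j∈R, j≠i} r_j. Then for every t ∈ [0,1], E[|ξ|] ≥ ( t(1 − t²)² / 9^{k−1} ) · 3^{−(k−1)/2} · √( Σ_{R∈B} u_R² ). -/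
/-!
Write `ξ = f(r)` for the multilinear polynomial `f = ∑_R u_R ∏_{j ∈ R \ {i}} X_j` of degree
`d = k - 1` in independent variables uniform on `[-1, 1]`. Splitting `f = g + X_j h` with `g, h`
free of `X_j` and using `E X = E X³ = 0`, `E X⁴ = 1/5 ≤ 9 (E X²)²`, induction on the variables
gives Bonami's inequality `E f⁴ ≤ 9^d (E f²)²`. The Cauchy–Schwarz bounds
`(E f²)² ≤ E|f| E|f|³` and `(E|f|³)² ≤ E f² E f⁴` turn it into `E f² ≤ 9^d (E|f|)²`, while
orthogonality of the monomials gives `E f² = ∑_R u_R² 3^{-(|R|-1)} ≥ 3^{-d} ∑_R u_R²`. Hence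
`E|ξ| ≥ 3^{-d} √(E f²) ≥ 3^{-3d/2} √(∑_R u_R²)`, and `t (1 - t²)² / 3^d ≤ 1` on `[0, 1]`.
-/

open MeasureTheory ProbabilityTheory MvPolynomial

section Moments

variable {α : Type*} [MeasurableSpace α] {μ : Measure α}

theorem sq_integral_le_integral_mul_integral {u v w : α → ℝ} (hu : Integrable u μ)
    (hv : Integrable v μ) (hw : Integrable w μ) (hu0 : ∀ x, 0 ≤ u x) (hv0 : ∀ x, 0 ≤ v x)
    (hwuv : ∀ x, w x ^ 2 ≤ u x * v x) :
    (∫ x, w x ∂μ) ^ 2 ≤ (∫ x, u x ∂μ) * ∫ x, v x ∂μ := by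
  have hquad (s : ℝ) :
      0 ≤ (∫ x, u x ∂μ) * (s * s) + (-2 * ∫ x, w x ∂μ) * s + ∫ x, v x ∂μ := by
    have hpt (x : α) : 0 ≤ u x * (s * s) + -2 * w x * s + v x := by
      rcases (hu0 x).eq_or_lt with hux | hux
      · have hw : w x ^ 2 = 0 := le_antisymm (by simpa [← hux] using hwuv x) (sq_nonneg _)
        simp [← hux, pow_eq_zero_iff two_ne_zero |>.1 hw, hv0 x]
      · refine (mul_nonneg_iff_of_pos_left hux).1 ?_
        nlinarith [sq_nonneg (u x * s - w x), hwuv x]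
    have huw : Integrable (fun x => u x * (s * s) + -2 * w x * s) μ :=
      (hu.mul_const _).add ((hw.const_mul _).mul_const _)
    calc (0 : ℝ) ≤ ∫ x, u x * (s * s) + -2 * w x * s + v x ∂μ := integral_nonneg hpt
      _ = _ := by
        rw [integral_add huw hv, integral_add (hu.mul_const _) ((hw.const_mul _).mul_const _),
          integral_mul_const, integral_mul_const, integral_const_mul]
  have := discrim_le_zero hquad
  rw [discrim] at this
  linarith

theorem integral_sq_le_mul_sq_integral_abs {f : α → ℝ} {C : ℝ} (hC0 : 0 ≤ C)
    (hf : Integrable f μ) (hf4 : Integrable (fun x => f x ^ 4) μ)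
    (hC : ∫ x, f x ^ 4 ∂μ ≤ C * (∫ x, f x ^ 2 ∂μ) ^ 2) :
    ∫ x, f x ^ 2 ∂μ ≤ C * (∫ x, |f x| ∂μ) ^ 2 := by
  simp only [← sq_abs (f _), ← Even.pow_abs (by decide : Even 4) (f _)] at hC hf4 ⊢
  have hint (n : ℕ) (hn1 : 1 ≤ n) (hn4 : n ≤ 4) : Integrable (fun x => |f x| ^ n) μ := by
    have hdom : Integrable (fun x => |f x| + |f x| ^ 4) μ := hf.abs.add hf4
    refine hdom.mono' (hf.aestronglyMeasurable.norm.pow n) (.of_forall fun x => ?_)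
    rw [Real.norm_of_nonneg (by positivity)]
    rcases le_total |f x| 1 with h | h
    · nlinarith [pow_le_of_le_one (abs_nonneg (f x)) h (by omega : n ≠ 0),
        pow_nonneg (abs_nonneg (f x)) 4]
    · nlinarith [pow_le_pow_right₀ h hn4, abs_nonneg (f x)]
  set A := ∫ x, |f x| ∂μ
  set Q := ∫ x, |f x| ^ 2 ∂μ
  set T := ∫ x, |f x| ^ 3 ∂μ
  have hQT : Q ^ 2 ≤ A * T :=
    sq_integral_le_integral_mul_integral hf.abs (hint 3 (by norm_num) (by norm_num))
      (hint 2 (by norm_num) (by norm_num)) (fun x => abs_nonneg _) (fun x => by positivity)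
      (fun x => by ring_nf; rfl)
  have hTQ : T ^ 2 ≤ Q * ∫ x, |f x| ^ 4 ∂μ :=
    sq_integral_le_integral_mul_integral (hint 2 (by norm_num) (by norm_num)) hf4
      (hint 3 (by norm_num) (by norm_num)) (fun x => by positivity) (fun x => by positivity)
      (fun x => by ring_nf; rfl)
  have hQ0 : 0 ≤ Q := integral_nonneg fun x => by positivity
  have hQ4 : Q ^ 3 * Q ≤ Q ^ 3 * (C * A ^ 2) :=
    calc Q ^ 3 * Q = (Q ^ 2) ^ 2 := by ring
      _ ≤ (A * T) ^ 2 := pow_le_pow_left₀ (by positivity) hQT 2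
      _ ≤ A ^ 2 * (Q * (C * Q ^ 2)) := by
        rw [mul_pow]; gcongr; exact hTQ.trans (by gcongr)
      _ = Q ^ 3 * (C * A ^ 2) := by ring
  rcases hQ0.eq_or_lt with hQ | hQ
  · rw [← hQ]; positivity
  · exact le_of_mul_le_mul_left hQ4 (by positivity)

theorem integral_comp_eq_integral_pi_of_iIndepFun {ι : Type*} [Fintype ι] {X : ι → α → ℝ}
    {ν : Measure ℝ} (hX : ∀ j, AEMeasurable (X j) μ) (hlaw : ∀ j, μ.map (X j) = ν)
    (hind : iIndepFun X μ) {F : (ι → ℝ) → ℝ}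
    (hF : AEStronglyMeasurable F (Measure.pi fun _ => ν)) :
    ∫ ω, F (fun j => X j ω) ∂μ = ∫ x, F x ∂Measure.pi fun _ => ν := by
  have hmap : μ.map (fun ω j => X j ω) = Measure.pi fun _ => ν :=
    (hind.map_fun_eq_pi_map hX).trans (congrArg Measure.pi (funext hlaw))
  rw [← hmap] at hF ⊢
  exact (integral_map (aemeasurable_pi_lambda _ hX) hF).symm

end Moments

section MultilinearPoly

variable {ι : Type*}

/-- Indexed by a family `S` rather than a set of sets, so that deleting a variable
(`S b ↦ (S b).erase j`) needs no reindexing; distinctness of the `S b` only matters for the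
second moment. -/
noncomputable def multilinearPoly {β : Type*} (s : Finset β) (S : β → Finset ι) (a : β → ℝ) :
    MvPolynomial ι ℝ :=
  ∑ b ∈ s, C (a b) * ∏ l ∈ S b, X l

theorem multilinearPoly_mem_supported {β : Type*} {s : Finset β} {S : β → Finset ι} (a : β → ℝ)
    {T : Set ι} (hS : ∀ b ∈ s, ↑(S b) ⊆ T) : multilinearPoly s S a ∈ supported ℝ T :=
  Subalgebra.sum_mem _ fun b hb => Subalgebra.mul_mem _ (Subalgebra.algebraMap_mem _ _)
    (Subalgebra.prod_mem _ fun _ hl => X_mem_supported.2 (hS b hb hl))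

theorem multilinearPoly_eq_add_X_mul [DecidableEq ι] {β : Type*} (s : Finset β)
    (S : β → Finset ι) (a : β → ℝ) (j : ι) :
    multilinearPoly s S a = multilinearPoly {b ∈ s | j ∉ S b} S a +
      X j * multilinearPoly {b ∈ s | j ∈ S b} (fun b => (S b).erase j) a := by
  rw [multilinearPoly, ← Finset.sum_filter_not_add_sum_filter s (fun b => j ∈ S b),
    multilinearPoly, multilinearPoly, Finset.mul_sum]
  congr 1
  refine Finset.sum_congr rfl fun b hb => ?_
  rw [← Finset.mul_prod_erase _ _ (Finset.mem_filter.1 hb).2]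
  ring

theorem prod_X_mul_prod_X_eq_monomial [DecidableEq ι] (S T : Finset ι) :
    (∏ l ∈ S, X l) * ∏ l ∈ T, X l =
      monomial (∑ l ∈ S, Finsupp.single l 1 + ∑ l ∈ T, Finsupp.single l 1) (1 : ℝ) := by
  simp only [X, ← monomial_sum_one, monomial_mul, one_mul]

end MultilinearPoly

theorem eval_multilinearPoly_subtype_ne {V : Type*} [DecidableEq V] (i : V)
    (s : Finset (Finset V)) (a : Finset V → ℝ) (x : V → ℝ) :
    eval (fun j : {j // j ≠ i} => x j) (multilinearPoly s (fun R => R.subtype (· ≠ i)) a) =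
      ∑ R ∈ s, a R * ∏ j ∈ R.erase i, x j := by
  simp only [multilinearPoly, map_sum, map_mul, eval_C, map_prod, eval_X,
    Finset.prod_subtype_eq_prod_filter x, Finset.filter_ne']

noncomputable section

variable {ι : Type*} [Fintype ι] {ν : Measure ℝ}

def polyExpectation (ν : Measure ℝ) (p : MvPolynomial ι ℝ) : ℝ :=
  ∫ x, eval x p ∂Measure.pi fun _ => ν

theorem eval_monomial_eq_prod (x : ι → ℝ) (d : ι →₀ ℕ) (c : ℝ) :
    eval x (monomial d c) = c * ∏ l, x l ^ d l := by
  rw [eval_monomial, Finsupp.prod_fintype _ _ fun _ => pow_zero _]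

theorem integrable_eval [SigmaFinite ν] (hν : ∀ n : ℕ, Integrable (fun y : ℝ => y ^ n) ν)
    (p : MvPolynomial ι ℝ) : Integrable (fun x => eval x p) (Measure.pi fun _ => ν) := by
  induction p using MvPolynomial.induction_on' with
  | monomial d c =>
    simp_rw [eval_monomial_eq_prod]
    exact (Integrable.fintype_prod fun l => hν (d l)).const_mul c
  | add p q hp hq =>
    simp only [map_add]
    exact hp.add hq

theorem polyExpectation_add [SigmaFinite ν] (hν : ∀ n : ℕ, Integrable (fun y : ℝ => y ^ n) ν)
    (p q : MvPolynomial ι ℝ) :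
    polyExpectation ν (p + q) = polyExpectation ν p + polyExpectation ν q := by
  simp only [polyExpectation, map_add]
  exact integral_add (integrable_eval hν p) (integrable_eval hν q)

theorem polyExpectation_sum [SigmaFinite ν] (hν : ∀ n : ℕ, Integrable (fun y : ℝ => y ^ n) ν)
    {β : Type*} (s : Finset β) (p : β → MvPolynomial ι ℝ) :
    polyExpectation ν (∑ b ∈ s, p b) = ∑ b ∈ s, polyExpectation ν (p b) := by
  simp only [polyExpectation, map_sum]
  exact integral_finsetSum s fun b _ => integrable_eval hν (p b)

theorem polyExpectation_C_mul (c : ℝ) (p : MvPolynomial ι ℝ) :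
    polyExpectation ν (C c * p) = c * polyExpectation ν p := by
  simp only [polyExpectation, map_mul, eval_C, integral_const_mul]

theorem polyExpectation_C [IsProbabilityMeasure ν] (c : ℝ) :
    polyExpectation ν (C c : MvPolynomial ι ℝ) = c := by
  simp [polyExpectation]

theorem polyExpectation_sq_nonneg (p : MvPolynomial ι ℝ) : 0 ≤ polyExpectation ν (p ^ 2) :=
  integral_nonneg fun x => by simp only [map_pow]; positivity

theorem polyExpectation_monomial [SigmaFinite ν] (d : ι →₀ ℕ) (c : ℝ) :
    polyExpectation ν (monomial d c) = c * ∏ l, moment id (d l) ν := by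
  simp_rw [polyExpectation, eval_monomial_eq_prod, integral_const_mul]
  rw [integral_fintype_prod_eq_prod (fun l (y : ℝ) => y ^ d l)]
  rfl

theorem moment_id_zero [IsProbabilityMeasure ν] : moment id 0 ν = 1 := by
  simp [moment]

theorem moment_id_two_nonneg : 0 ≤ moment id 2 ν :=
  integral_nonneg fun y => by simp only [Pi.pow_apply, id]; positivity

theorem polyExpectation_X_pow_mul [DecidableEq ι] [IsProbabilityMeasure ν]
    (hν : ∀ n : ℕ, Integrable (fun y : ℝ => y ^ n) ν) {j : ι} {q : MvPolynomial ι ℝ}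
    (hq : q ∈ supported ℝ ({j}ᶜ : Set ι)) (c : ℕ) :
    polyExpectation ν (X j ^ c * q) = moment id c ν * polyExpectation ν q := by
  have hdj : ∀ d ∈ q.support, d j = 0 := fun d hd => by
    by_contra h
    exact mem_supported.1 hq
      ((mem_vars_iff_mem_support j).2 ⟨d, hd, Finsupp.mem_support_iff.2 h⟩) rfl
  conv_lhs => rw [q.as_sum, Finset.mul_sum]
  conv_rhs => rw [q.as_sum]
  simp only [X_pow_eq_monomial, monomial_mul, one_mul, polyExpectation_sum hν,
    polyExpectation_monomial, Finset.mul_sum]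
  refine Finset.sum_congr rfl fun d hd => ?_
  rw [Fintype.prod_eq_mul_prod_compl j,
    Fintype.prod_eq_mul_prod_compl j (fun l => moment id (d l) ν)]
  simp only [Finsupp.add_apply, Finsupp.single_eq_same, hdj d hd, add_zero, moment_id_zero,
    one_mul]
  rw [Finset.prod_congr rfl fun l hl => by
    rw [Finsupp.single_eq_of_ne (by simpa using hl), zero_add]]
  ring

theorem polyExpectation_prod_X_mul_prod_X [DecidableEq ι] [IsProbabilityMeasure ν]
    (h1 : moment id 1 ν = 0) (S T : Finset ι) :
    polyExpectation ν ((∏ l ∈ S, X l) * ∏ l ∈ T, X l) =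
      if S = T then moment id 2 ν ^ S.card else 0 := by
  rw [prod_X_mul_prod_X_eq_monomial, polyExpectation_monomial, one_mul]
  simp only [Finsupp.add_apply, Finsupp.finsetSum_apply, Finsupp.single_apply,
    Finset.sum_ite_eq']
  split_ifs with hST
  · subst hST
    simp_rw [← two_mul, mul_ite, mul_one, mul_zero, apply_ite (moment id · ν), moment_id_zero]
    rw [Finset.prod_ite_mem, Finset.univ_inter, Finset.prod_const]
  · obtain ⟨l, hl⟩ : ∃ l, ¬(l ∈ S ↔ l ∈ T) := by
      by_contra! h
      exact hST (Finset.ext h)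
    refine Finset.prod_eq_zero (Finset.mem_univ l) ?_
    by_cases hS : l ∈ S <;> by_cases hT : l ∈ T <;> simp_all

theorem polyExpectation_multilinearPoly_sq [DecidableEq ι] [IsProbabilityMeasure ν]
    (hν : ∀ n : ℕ, Integrable (fun y : ℝ => y ^ n) ν) (h1 : moment id 1 ν = 0)
    {β : Type*} {s : Finset β} {S : β → Finset ι} (hS : Set.InjOn S s) (a : β → ℝ) :
    polyExpectation ν (multilinearPoly s S a ^ 2) =
      ∑ b ∈ s, a b ^ 2 * moment id 2 ν ^ (S b).card := by
  rw [multilinearPoly, sq, Finset.sum_mul_sum, polyExpectation_sum hν]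
  refine Finset.sum_congr rfl fun b hb => ?_
  have hterm (b' : β) :
      polyExpectation ν ((C (a b) * ∏ l ∈ S b, X l) * (C (a b') * ∏ l ∈ S b', X l)) =
        a b * a b' * if S b = S b' then moment id 2 ν ^ (S b).card else 0 := by
    rw [mul_mul_mul_comm, ← C_mul, polyExpectation_C_mul, polyExpectation_prod_X_mul_prod_X h1]
  rw [polyExpectation_sum hν, Finset.sum_eq_single_of_mem b hb fun b' hb' hne => by
    rw [hterm, if_neg fun h => hne (hS hb' hb h.symm), mul_zero], hterm, if_pos rfl, sq]

theorem polyExpectation_add_X_mul_sq [DecidableEq ι] [IsProbabilityMeasure ν]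
    (hν : ∀ n : ℕ, Integrable (fun y : ℝ => y ^ n) ν) (h1 : moment id 1 ν = 0) {j : ι}
    {g h : MvPolynomial ι ℝ} (hg : g ∈ supported ℝ ({j}ᶜ : Set ι))
    (hh : h ∈ supported ℝ ({j}ᶜ : Set ι)) :
    polyExpectation ν ((g + X j * h) ^ 2) =
      polyExpectation ν (g ^ 2) + moment id 2 ν * polyExpectation ν (h ^ 2) := by
  have hexp : (g + X j * h) ^ 2 = g ^ 2 + X j ^ 1 * (2 * g * h) + X j ^ 2 * h ^ 2 := by ring
  rw [hexp, polyExpectation_add hν, polyExpectation_add hν,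
    polyExpectation_X_pow_mul hν (mul_mem (mul_mem (ofNat_mem _ 2) hg) hh),
    polyExpectation_X_pow_mul hν (pow_mem hh 2), h1, zero_mul, add_zero]

theorem polyExpectation_add_X_mul_pow_four [DecidableEq ι] [IsProbabilityMeasure ν]
    (hν : ∀ n : ℕ, Integrable (fun y : ℝ => y ^ n) ν) (h1 : moment id 1 ν = 0)
    (h3 : moment id 3 ν = 0) {j : ι}
    {g h : MvPolynomial ι ℝ} (hg : g ∈ supported ℝ ({j}ᶜ : Set ι))
    (hh : h ∈ supported ℝ ({j}ᶜ : Set ι)) :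
    polyExpectation ν ((g + X j * h) ^ 4) = polyExpectation ν (g ^ 4) +
      6 * moment id 2 ν * polyExpectation ν (g ^ 2 * h ^ 2) +
        moment id 4 ν * polyExpectation ν (h ^ 4) := by
  have hexp : (g + X j * h) ^ 4 = g ^ 4 + X j ^ 1 * (4 * g ^ 3 * h) +
      X j ^ 2 * (C 6 * (g ^ 2 * h ^ 2)) + X j ^ 3 * (4 * g * h ^ 3) + X j ^ 4 * h ^ 4 := by
    rw [show (C 6 : MvPolynomial ι ℝ) = 6 from map_ofNat C 6]
    ring
  rw [hexp, polyExpectation_add hν, polyExpectation_add hν, polyExpectation_add hν,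
    polyExpectation_add hν,
    polyExpectation_X_pow_mul hν (mul_mem (mul_mem (ofNat_mem _ 4) (pow_mem hg 3)) hh),
    polyExpectation_X_pow_mul hν (mul_mem (Subalgebra.algebraMap_mem _ 6)
      (mul_mem (pow_mem hg 2) (pow_mem hh 2)) : C 6 * (g ^ 2 * h ^ 2) ∈ _),
    polyExpectation_X_pow_mul hν (mul_mem (mul_mem (ofNat_mem _ 4) hg) (pow_mem hh 3)),
    polyExpectation_X_pow_mul hν (pow_mem hh 4), polyExpectation_C_mul, h1, h3]
  ring

theorem sq_polyExpectation_sq_mul_sq_le [SigmaFinite ν]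
    (hν : ∀ n : ℕ, Integrable (fun y : ℝ => y ^ n) ν) (g h : MvPolynomial ι ℝ) :
    polyExpectation ν (g ^ 2 * h ^ 2) ^ 2 ≤
      polyExpectation ν (g ^ 4) * polyExpectation ν (h ^ 4) :=
  sq_integral_le_integral_mul_integral (integrable_eval hν _) (integrable_eval hν _)
    (integrable_eval hν _) (fun x => by simp only [map_pow]; positivity)
    (fun x => by simp only [map_pow]; positivity)
    (fun x => le_of_eq (by simp only [map_mul, map_pow]; ring))

theorem polyExpectation_add_X_mul_pow_four_le [DecidableEq ι] [IsProbabilityMeasure ν]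
    (hν : ∀ n : ℕ, Integrable (fun y : ℝ => y ^ n) ν) (h1 : moment id 1 ν = 0)
    (h3 : moment id 3 ν = 0) (h4 : moment id 4 ν ≤ 9 * moment id 2 ν ^ 2) {j : ι}
    {g h : MvPolynomial ι ℝ} (hg : g ∈ supported ℝ ({j}ᶜ : Set ι))
    (hh : h ∈ supported ℝ ({j}ᶜ : Set ι)) {e : ℕ}
    (hgB : polyExpectation ν (g ^ 4) ≤ 9 ^ (e + 1) * polyExpectation ν (g ^ 2) ^ 2)
    (hhB : polyExpectation ν (h ^ 4) ≤ 9 ^ e * polyExpectation ν (h ^ 2) ^ 2) :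
    polyExpectation ν ((g + X j * h) ^ 4) ≤
      9 ^ (e + 1) * polyExpectation ν ((g + X j * h) ^ 2) ^ 2 := by
  rw [polyExpectation_add_X_mul_pow_four hν h1 h3 hg hh,
    polyExpectation_add_X_mul_sq hν h1 hg hh]
  have hσ := moment_id_two_nonneg (ν := ν)
  have hG2 := polyExpectation_sq_nonneg (ν := ν) g
  have hH2 := polyExpectation_sq_nonneg (ν := ν) h
  have hH4 : 0 ≤ polyExpectation ν (h ^ 4) := by
    rw [show h ^ 4 = (h ^ 2) ^ 2 by ring]
    exact polyExpectation_sq_nonneg _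
  have hP : polyExpectation ν (g ^ 2 * h ^ 2) ≤
      3 * 9 ^ e * polyExpectation ν (g ^ 2) * polyExpectation ν (h ^ 2) := by
    refine le_of_abs_le (abs_le_of_sq_le_sq ?_ (by positivity))
    calc polyExpectation ν (g ^ 2 * h ^ 2) ^ 2
        ≤ polyExpectation ν (g ^ 4) * polyExpectation ν (h ^ 4) :=
          sq_polyExpectation_sq_mul_sq_le hν g h
      _ ≤ 9 ^ (e + 1) * polyExpectation ν (g ^ 2) ^ 2 *
            (9 ^ e * polyExpectation ν (h ^ 2) ^ 2) :=
          mul_le_mul hgB hhB hH4 (by positivity)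
      _ = _ := by ring
  have hm : moment id 4 ν * polyExpectation ν (h ^ 4) ≤
      9 * moment id 2 ν ^ 2 * (9 ^ e * polyExpectation ν (h ^ 2) ^ 2) :=
    mul_le_mul h4 hhB hH4 (by positivity)
  rw [pow_succ] at hgB ⊢
  linear_combination hgB + hm + mul_le_mul_of_nonneg_left hP (by positivity : 0 ≤ 6 * moment id 2 ν)

theorem polyExpectation_multilinearPoly_pow_four_le [DecidableEq ι] [IsProbabilityMeasure ν]
    (hν : ∀ n : ℕ, Integrable (fun y : ℝ => y ^ n) ν) (h1 : moment id 1 ν = 0)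
    (h3 : moment id 3 ν = 0) (h4 : moment id 4 ν ≤ 9 * moment id 2 ν ^ 2) {β : Type*}
    (s : Finset β) (S : β → Finset ι) (a : β → ℝ) {d : ℕ} (hd : ∀ b ∈ s, (S b).card ≤ d) :
    polyExpectation ν (multilinearPoly s S a ^ 4) ≤
      9 ^ d * polyExpectation ν (multilinearPoly s S a ^ 2) ^ 2 := by
  suffices key : ∀ (J : Finset ι) (d : ℕ) (s : Finset β) (S : β → Finset ι),
      (∀ b ∈ s, S b ⊆ J ∧ (S b).card ≤ d) → polyExpectation ν (multilinearPoly s S a ^ 4) ≤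
        9 ^ d * polyExpectation ν (multilinearPoly s S a ^ 2) ^ 2 from
    key Finset.univ d s S fun b hb => ⟨Finset.subset_univ _, hd b hb⟩
  intro J
  induction J using Finset.induction_on with
  | empty =>
    intro d s S hS
    have hconst : multilinearPoly s S a = C (∑ b ∈ s, a b) := by
      rw [multilinearPoly, map_sum]
      exact Finset.sum_congr rfl fun b hb => by simp [Finset.subset_empty.1 (hS b hb).1]
    rw [hconst, ← C_pow, ← C_pow, polyExpectation_C, polyExpectation_C, ← pow_mul]
    exact le_mul_of_one_le_left (by positivity) (one_le_pow₀ (by norm_num))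
  | insert j J _ IH =>
    intro d s S hS
    cases d with
    | zero =>
      refine IH 0 s S fun b hb => ⟨?_, (hS b hb).2⟩
      simp [Finset.card_eq_zero.1 (Nat.le_zero.1 (hS b hb).2)]
    | succ e =>
      rw [multilinearPoly_eq_add_X_mul s S a j]
      refine polyExpectation_add_X_mul_pow_four_le hν h1 h3 h4
        (multilinearPoly_mem_supported a fun b hb l hl => ?_)
        (multilinearPoly_mem_supported a fun b hb l hl => Finset.ne_of_mem_erase hl)
        (IH _ _ _ fun b hb => ?_) (IH _ _ _ fun b hb => ?_)
      · rintro rfl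
        exact (Finset.mem_filter.1 hb).2 hl
      · obtain ⟨hbs, hjb⟩ := Finset.mem_filter.1 hb
        exact ⟨(Finset.subset_insert_iff_of_notMem hjb).1 (hS b hbs).1, (hS b hbs).2⟩
      · obtain ⟨hbs, hjb⟩ := Finset.mem_filter.1 hb
        refine ⟨Finset.subset_insert_iff.1 (hS b hbs).1, ?_⟩
        rw [Finset.card_erase_of_mem hjb]
        exact Nat.sub_le_of_le_add (hS b hbs).2

theorem polyExpectation_multilinearPoly_sq_le [DecidableEq ι] [IsProbabilityMeasure ν]
    (hν : ∀ n : ℕ, Integrable (fun y : ℝ => y ^ n) ν) (h1 : moment id 1 ν = 0)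
    (h3 : moment id 3 ν = 0) (h4 : moment id 4 ν ≤ 9 * moment id 2 ν ^ 2) {β : Type*}
    (s : Finset β) (S : β → Finset ι) (a : β → ℝ) {d : ℕ} (hd : ∀ b ∈ s, (S b).card ≤ d) :
    polyExpectation ν (multilinearPoly s S a ^ 2) ≤
      9 ^ d * (∫ x, |eval x (multilinearPoly s S a)| ∂Measure.pi fun _ => ν) ^ 2 := by
  have hbonami := polyExpectation_multilinearPoly_pow_four_le hν h1 h3 h4 s S a hd
  simp only [polyExpectation, map_pow] at hbonami ⊢
  refine integral_sq_le_mul_sq_integral_abs (by positivity) (integrable_eval hν _) ?_ hbonami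
  exact (integrable_eval hν (multilinearPoly s S a ^ 4)).congr
    (.of_forall fun x => map_pow _ _ _)

theorem pow_mul_sum_sq_le_polyExpectation_multilinearPoly_sq [DecidableEq ι]
    [IsProbabilityMeasure ν] (hν : ∀ n : ℕ, Integrable (fun y : ℝ => y ^ n) ν)
    (h1 : moment id 1 ν = 0) (h2 : moment id 2 ν ≤ 1) {β : Type*} {s : Finset β}
    {S : β → Finset ι} (hS : Set.InjOn S s) (a : β → ℝ) {d : ℕ}
    (hd : ∀ b ∈ s, (S b).card ≤ d) :
    moment id 2 ν ^ d * ∑ b ∈ s, a b ^ 2 ≤ polyExpectation ν (multilinearPoly s S a ^ 2) := by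
  rw [polyExpectation_multilinearPoly_sq hν h1 hS, Finset.mul_sum]
  refine Finset.sum_le_sum fun b hb => ?_
  rw [mul_comm]
  exact mul_le_mul_of_nonneg_left (pow_le_pow_of_le_one moment_id_two_nonneg h2 (hd b hb))
    (sq_nonneg _)

end

noncomputable def uniformNegOneOne : Measure ℝ :=
  (2⁻¹ : ENNReal) • volume.restrict (Set.Icc (-1 : ℝ) 1)

instance : IsProbabilityMeasure uniformNegOneOne := by
  constructor
  norm_num [uniformNegOneOne, Real.volume_Icc, ENNReal.inv_mul_cancel]

theorem integrable_pow_uniformNegOneOne (n : ℕ) :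
    Integrable (fun y : ℝ => y ^ n) uniformNegOneOne :=
  ((continuous_pow n).continuousOn.integrableOn_compact isCompact_Icc).integrable.smul_measure
    (by norm_num)

theorem moment_uniformNegOneOne (n : ℕ) :
    moment id n uniformNegOneOne = (1 - (-1) ^ (n + 1)) / (2 * (n + 1)) := by
  rw [moment, uniformNegOneOne, integral_smul_measure, integral_Icc_eq_integral_Ioc,
    ← intervalIntegral.integral_of_le (by norm_num)]
  simp only [Pi.pow_apply, id, integral_pow, one_pow, ENNReal.toReal_inv, ENNReal.toReal_ofNat,
    smul_eq_mul]
  field_simp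

theorem injOn_subtype_ne {V : Type*} [DecidableEq V] (i : V) :
    Set.InjOn (fun R : Finset V => R.subtype (· ≠ i)) {R | i ∈ R} := by
  intro R hR R' hR' h
  have := congrArg (Finset.map (Function.Embedding.subtype _)) h
  simp only [Finset.subtype_map, Finset.filter_ne'] at this
  rw [← Finset.insert_erase hR, ← Finset.insert_erase hR', this]

theorem mul_div_nine_pow_mul_sqrt_le {t q A : ℝ} (d : ℕ) (ht : t ∈ Set.Icc (0 : ℝ) 1)
    (hA : 0 ≤ A) (h : (3 : ℝ)⁻¹ ^ d * q ≤ 9 ^ d * A ^ 2) :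
    t * (1 - t ^ 2) ^ 2 / 9 ^ d * √((3 : ℝ)⁻¹ ^ d) * √q ≤ A := by
  have ht1 : t * (1 - t ^ 2) ^ 2 ≤ 1 :=
    mul_le_one₀ ht.2 (by positivity) (pow_le_one₀ (by nlinarith [ht.1, ht.2]) (by nlinarith))
  have hsqrt : √(9 ^ d * A ^ 2) = 3 ^ d * A := by
    rw [show (9 : ℝ) ^ d * A ^ 2 = (3 ^ d * A) ^ 2 by
      rw [mul_pow, ← pow_mul, mul_comm d, pow_mul]; norm_num]
    exact Real.sqrt_sq (by positivity)
  calc t * (1 - t ^ 2) ^ 2 / 9 ^ d * √((3 : ℝ)⁻¹ ^ d) * √q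
      = t * (1 - t ^ 2) ^ 2 / 9 ^ d * √((3 : ℝ)⁻¹ ^ d * q) := by
        rw [Real.sqrt_mul (by positivity), mul_assoc]
    _ ≤ t * (1 - t ^ 2) ^ 2 / 9 ^ d * √(9 ^ d * A ^ 2) :=
        mul_le_mul_of_nonneg_left (Real.sqrt_le_sqrt h)
          (div_nonneg (mul_nonneg ht.1 (sq_nonneg _)) (by positivity))
    _ = t * (1 - t ^ 2) ^ 2 * A / 3 ^ d := by
        rw [hsqrt, show (9 : ℝ) ^ d = 3 ^ d * 3 ^ d by rw [← mul_pow]; norm_num]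
        field_simp
    _ ≤ A := by
        rw [div_le_iff₀ (by positivity)]
        calc t * (1 - t ^ 2) ^ 2 * A ≤ 1 * A := mul_le_mul_of_nonneg_right ht1 hA
          _ ≤ A * 3 ^ d := by
            rw [one_mul]; exact le_mul_of_one_le_right hA (one_le_pow₀ (by norm_num))

theorem local_update_first_moment_general
    {Ω : Type*} [MeasurableSpace Ω] (μ : Measure Ω)
    {V : Type*} [Fintype V] [DecidableEq V] (i : V) (k : ℕ)
    (B : Finset (Finset V))
    (hB : ∀ R ∈ B, i ∈ R ∧ (∃ j ∈ R, j ≠ i) ∧ R.card ≤ k)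
    (r : V → Ω → ℝ)
    (hmeas : ∀ j ≠ i, Measurable (r j))
    (hunif : ∀ j ≠ i,
      Measure.map (r j) μ = (2⁻¹ : ENNReal) • volume.restrict (Set.Icc (-1 : ℝ) 1))
    (hindep : iIndepFun (fun j : { j : V // j ≠ i } => r j) μ)
    (u : Finset V → ℝ)
    (ξ : Ω → ℝ) (hξ : ∀ ω, ξ ω = ∑ R ∈ B, u R * ∏ j ∈ R.erase i, r j ω) :
    ∀ t ∈ Set.Icc (0 : ℝ) 1,
      t * (1 - t ^ 2) ^ 2 / 9 ^ (k - 1) * Real.sqrt ((3 : ℝ)⁻¹ ^ (k - 1)) *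
          Real.sqrt (∑ R ∈ B, (u R) ^ 2)
        ≤ ∫ ω, |ξ ω| ∂μ := by
  intro t ht
  set p := multilinearPoly B (fun R => R.subtype (· ≠ i)) u
  have hcard (R : Finset V) (hR : R ∈ B) : (R.subtype (· ≠ i)).card ≤ k - 1 := by
    rw [Finset.card_subtype, Finset.filter_ne', Finset.card_erase_of_mem (hB R hR).1]
    exact Nat.sub_le_sub_right (hB R hR).2.2 1
  have hmom := moment_uniformNegOneOne
  have hL2 := pow_mul_sum_sq_le_polyExpectation_multilinearPoly_sq
    integrable_pow_uniformNegOneOne (by norm_num [hmom]) (by norm_num [hmom])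
    (fun R hR R' hR' => injOn_subtype_ne i (hB R hR).1 (hB R' hR').1) u hcard
  have hL2L1 := polyExpectation_multilinearPoly_sq_le integrable_pow_uniformNegOneOne
    (by norm_num [hmom]) (by norm_num [hmom]) (by norm_num [hmom]) B _ u hcard
  have hξp : ∫ ω, |ξ ω| ∂μ = ∫ x, |eval x p| ∂Measure.pi fun _ => uniformNegOneOne := by
    simp_rw [hξ, ← eval_multilinearPoly_subtype_ne i B u]
    exact integral_comp_eq_integral_pi_of_iIndepFun
      (fun j : {j // j ≠ i} => (hmeas j.1 j.2).aemeasurable) (fun j => hunif j.1 j.2) hindep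
      (continuous_eval p).abs.aestronglyMeasurable
  rw [hξp]
  refine mul_div_nine_pow_mul_sqrt_le (k - 1) ht (integral_nonneg fun _ => abs_nonneg _) ?_
  rw [show moment id 2 uniformNegOneOne = 3⁻¹ by norm_num [hmom]] at hL2
  exact hL2.trans hL2L1

/-- **First-moment lower bound for the local-update random variable.**
Fix a vertex `i` of a finite set `V` and a finite family `B` of pairwise distinct subsets of
`V`, each containing `i` and at least one other vertex, with `|R| ≤ k`, and `u : B → ℝ` with
`Σ_{R∈B} u_R² > 0`.  If `(r j)_{j ≠ i}` are i.i.d. uniform on `[−1,1]` and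
`ξ = Σ_{R∈B} u_R ∏_{j∈R, j≠i} r_j`, then for every `t ∈ [0,1]`,
`E[|ξ|] ≥ (t (1−t²)² / 9^{k−1}) · 3^{−(k−1)/2} · √(Σ_{R∈B} u_R²)`. -/
theorem local_update_first_moment
    {Ω : Type*} [MeasurableSpace Ω] (μ : Measure Ω) [IsProbabilityMeasure μ]
    {V : Type*} [Fintype V] [DecidableEq V] (i : V) (k : ℕ)
    (B : Finset (Finset V))
    (hB : ∀ R ∈ B, i ∈ R ∧ (∃ j ∈ R, j ≠ i) ∧ R.card ≤ k)
    (r : V → Ω → ℝ)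
    (hmeas : ∀ j ≠ i, Measurable (r j))
    (hunif : ∀ j ≠ i,
      Measure.map (r j) μ = (2⁻¹ : ENNReal) • volume.restrict (Set.Icc (-1 : ℝ) 1))
    (hindep : iIndepFun (fun j : { j : V // j ≠ i } => r j) μ)
    (u : Finset V → ℝ) (hu : 0 < ∑ R ∈ B, (u R) ^ 2)
    (ξ : Ω → ℝ) (hξ : ∀ ω, ξ ω = ∑ R ∈ B, u R * ∏ j ∈ R.erase i, r j ω) :
    ∀ t ∈ Set.Icc (0 : ℝ) 1,
      t * (1 - t ^ 2) ^ 2 / 9 ^ (k - 1) * Real.sqrt ((3 : ℝ)⁻¹ ^ (k - 1)) *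
          Real.sqrt (∑ R ∈ B, (u R) ^ 2)
        ≤ ∫ ω, |ξ ω| ∂μ :=
  local_update_first_moment_general μ i k B hB r hmeas hunif hindep u ξ hξ
end
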